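/- arXiv:2509.15386 — 4 statements merged into one kernel-verified Lean document; each statement's English description precedes it below -/
import Mathlib

section
/- For the cycle C_n (n ≥ 3): GC(C₃) = 2; GC(C₄) = 4; GC(C₅) = 4; GC(C₆) = 6; GC(C₇) = 5; and GC(C_n) = 6 for all n ≥ 8. -/
set_option maxRecDepth 100000

open SimpleGraph Finset

variable {V : Type*} [Fintype V] [DecidableEq V]

/-- `S` is a dominating set of the graph `G`. -/
def IsDomSet (G : SimpleGraph V) (S : Finset V) : Prop :=
  ∀ v : V, v ∈ S ∨ ∃ u ∈ S, G.Adj u v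

/-- `S` is a global dominating set of `G`: it dominates both `G` and its complement. -/
def IsGlobalDomSet (G : SimpleGraph V) (S : Finset V) : Prop :=
  IsDomSet G S ∧ IsDomSet Gᶜ S

/-- Disjoint sets `A` and `B` form a global coalition in `G`. -/
def IsGlobalCoalition (G : SimpleGraph V) (A B : Finset V) : Prop :=
  Disjoint A B ∧ ¬ IsGlobalDomSet G A ∧ ¬ IsGlobalDomSet G B ∧ IsGlobalDomSet G (A ∪ B)

/-- `π` is a global coalition partition (gc-partition) of `G`. -/
def IsGCPartition (G : SimpleGraph V) (π : Finpartition (Finset.univ : Finset V)) : Prop :=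
  ∀ A ∈ π.parts, ¬ IsGlobalDomSet G A ∧ ∃ B ∈ π.parts, B ≠ A ∧ IsGlobalCoalition G A B

/-- The global coalition number `GC(G)`: the maximum number of parts in a gc-partition of `G`. -/
noncomputable def globalCoalitionNumber (G : SimpleGraph V) : ℕ :=
  sSup {n | ∃ π : Finpartition (Finset.univ : Finset V), IsGCPartition G π ∧ π.parts.card = n}

set_option linter.unusedSectionVars false
set_option linter.unusedVariables false

instance {G : SimpleGraph V} [DecidableRel G.Adj] {S : Finset V} : Decidable (IsDomSet G S) :=
  decidable_of_iff (∀ v : V, v ∈ S ∨ ∃ u ∈ S, G.Adj u v) Iff.rfl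

instance {G : SimpleGraph V} [DecidableRel G.Adj] {S : Finset V} :
    Decidable (IsGlobalDomSet G S) :=
  decidable_of_iff (IsDomSet G S ∧ IsDomSet Gᶜ S) Iff.rfl

instance {G : SimpleGraph V} [DecidableRel G.Adj] {A B : Finset V} :
    Decidable (IsGlobalCoalition G A B) :=
  decidable_of_iff (Disjoint A B ∧ ¬ IsGlobalDomSet G A ∧ ¬ IsGlobalDomSet G B ∧
    IsGlobalDomSet G (A ∪ B)) Iff.rfl

instance {G : SimpleGraph V} [DecidableRel G.Adj] {π : Finpartition (Finset.univ : Finset V)} :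
    Decidable (IsGCPartition G π) :=
  decidable_of_iff (∀ A ∈ π.parts, ¬ IsGlobalDomSet G A ∧ ∃ B ∈ π.parts, B ≠ A ∧
    IsGlobalCoalition G A B) Iff.rfl


section NatLevel

variable {n : ℕ} [NeZero n]

lemma val_one_eq (hn : 2 ≤ n) : ((1 : Fin n) : ℕ) = 1 := by
  rw [Fin.val_one']; exact Nat.mod_eq_of_lt hn

open Fin.CommRing in
lemma cg_adj_iff (hn : 2 ≤ n) {u v : Fin n} :
    (cycleGraph n).Adj u v ↔ u = v + 1 ∨ u = v - 1 := by
  rw [cycleGraph_adj']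
  constructor
  · rintro (h | h)
    · left
      have : u - v = 1 := Fin.ext (by rw [h, val_one_eq hn])
      rw [← this]; ring
    · right
      have : v - u = 1 := Fin.ext (by rw [h, val_one_eq hn])
      have h2 : u = v - (v - u) := by ring
      rw [h2, this]
  · rintro (rfl | rfl)
    · left
      have : v + 1 - v = 1 := by ring
      rw [this, val_one_eq hn]
    · right
      have : v - (v - 1) = 1 := by ring
      rw [this, val_one_eq hn]

lemma add_one_val (hn : 2 ≤ n) (v : Fin n) : ((v + 1 : Fin n) : ℕ) = (v.val + 1) % n := by
  rw [Fin.val_add, val_one_eq hn]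

lemma sub_one_val (hn : 2 ≤ n) (v : Fin n) : ((v - 1 : Fin n) : ℕ) = (v.val + (n - 1)) % n := by
  rw [Fin.sub_def, val_one_eq hn]
  show (n - 1 + v.val) % n = _
  rw [Nat.add_comm]

/-- The window condition at Nat level. -/
def NatDom (n : ℕ) (Q : ℕ → Prop) : Prop :=
  ∀ k, k < n → Q k ∨ Q ((k + 1) % n) ∨ Q ((k + (n - 1)) % n)

/-- A part of the cycle given by a predicate on values. -/
def FS (n : ℕ) (Q : ℕ → Prop) [DecidablePred Q] : Finset (Fin n) :=
  univ.filter (fun v => Q v.val)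

lemma mem_FS {Q : ℕ → Prop} [DecidablePred Q] {v : Fin n} : v ∈ FS n Q ↔ Q v.val := by
  simp [FS]

lemma FS_union {Q R : ℕ → Prop} [DecidablePred Q] [DecidablePred R] :
    FS n Q ∪ FS n R = FS n (fun k => Q k ∨ R k) := by
  ext v; simp [FS]

lemma isDom_FS_iff (hn : 2 ≤ n) {Q : ℕ → Prop} [DecidablePred Q] :
    IsDomSet (cycleGraph n) (FS n Q) ↔ NatDom n Q := by
  constructor
  · intro h k hk
    rcases h ⟨k, hk⟩ with hv | ⟨u, hu, hadj⟩
    · exact Or.inl (mem_FS.1 hv)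
    · rw [mem_FS] at hu
      rcases (cg_adj_iff hn).1 hadj with rfl | rfl
      · rw [add_one_val hn] at hu
        exact Or.inr (Or.inl hu)
      · rw [sub_one_val hn] at hu
        exact Or.inr (Or.inr hu)
  · intro h v
    rcases h v.val v.isLt with hv | hv | hv
    · exact Or.inl (mem_FS.2 hv)
    · refine Or.inr ⟨v + 1, mem_FS.2 (by rw [add_one_val hn]; exact hv), ?_⟩
      exact (cg_adj_iff hn).2 (Or.inl rfl)
    · refine Or.inr ⟨v - 1, mem_FS.2 (by rw [sub_one_val hn]; exact hv), ?_⟩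
      exact (cg_adj_iff hn).2 (Or.inr rfl)

lemma natDom_of (hn : 2 ≤ n) {Q : ℕ → Prop}
    (h0 : Q 0 ∨ Q 1 ∨ Q (n - 1))
    (hl : Q (n - 1) ∨ Q 0 ∨ Q (n - 2))
    (hmid : ∀ k, 1 ≤ k → k + 1 < n → Q k ∨ Q (k + 1) ∨ Q (k - 1)) :
    NatDom n Q := by
  intro k hk
  by_cases hk0 : k = 0
  · subst hk0
    rw [Nat.zero_add, Nat.zero_add, Nat.mod_eq_of_lt (by omega), Nat.mod_eq_of_lt (by omega)]
    exact h0
  by_cases hkl : k = n - 1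
  · subst hkl
    have e1 : (n - 1 + 1) % n = 0 := by
      have : n - 1 + 1 = n := by omega
      rw [this, Nat.mod_self]
    have e2 : (n - 1 + (n - 1)) % n = n - 2 := by
      have : n - 1 + (n - 1) = n + (n - 2) := by omega
      rw [this, Nat.add_mod_left, Nat.mod_eq_of_lt (by omega)]
    rw [e1, e2]
    exact hl
  · have e1 : (k + 1) % n = k + 1 := Nat.mod_eq_of_lt (by omega)
    have e2 : (k + (n - 1)) % n = k - 1 := by
      have : k + (n - 1) = n + (k - 1) := by omega
      rw [this, Nat.add_mod_left, Nat.mod_eq_of_lt (by omega)]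
    rw [e1, e2]
    exact hmid k (by omega) (by omega)

lemma not_dom_FS (hn : 2 ≤ n) {Q : ℕ → Prop} [DecidablePred Q] (k : ℕ)
    (hk1 : 1 ≤ k) (hk2 : k + 1 < n)
    (h : ¬ Q (k - 1) ∧ ¬ Q k ∧ ¬ Q (k + 1)) :
    ¬ IsDomSet (cycleGraph n) (FS n Q) := by
  rw [isDom_FS_iff hn]
  intro hN
  have e1 : (k + 1) % n = k + 1 := Nat.mod_eq_of_lt (by omega)
  have e2 : (k + (n - 1)) % n = k - 1 := by
    have : k + (n - 1) = n + (k - 1) := by omega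
    rw [this, Nat.add_mod_left, Nat.mod_eq_of_lt (by omega)]
  rcases hN k (by omega) with h' | h' | h'
  · exact h.2.1 h'
  · rw [e1] at h'; exact h.2.2 h'
  · rw [e2] at h'; exact h.1 h'

end NatLevel

section CycleAux
variable {n : ℕ} [NeZero n]

/-- `S` meets the closed neighbourhood of every vertex. -/
lemma dom_meet_window (hn : 2 ≤ n) {S : Finset (Fin n)}
    (h : IsDomSet (cycleGraph n) S) (v : Fin n) :
    ∃ u ∈ S, u = v - 1 ∨ u = v ∨ u = v + 1 := by
  rcases h v with hv | ⟨u, hu, hadj⟩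
  · exact ⟨v, hv, Or.inr (Or.inl rfl)⟩
  · rcases (cg_adj_iff hn).1 hadj with rfl | rfl
    · exact ⟨v + 1, hu, Or.inr (Or.inr rfl)⟩
    · exact ⟨v - 1, hu, Or.inl rfl⟩

lemma hole_of_not_dom (hn : 2 ≤ n) {S : Finset (Fin n)}
    (h : ¬ IsDomSet (cycleGraph n) S) :
    ∃ v : Fin n, (v - 1) ∉ S ∧ v ∉ S ∧ (v + 1) ∉ S := by
  unfold IsDomSet at h
  push_neg at h
  obtain ⟨v, hv, hu⟩ := h
  refine ⟨v, fun hm => ?_, hv, fun hm => ?_⟩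
  · exact hu _ hm ((cg_adj_iff hn).2 (Or.inr rfl))
  · exact hu _ hm ((cg_adj_iff hn).2 (Or.inl rfl))

open Fin.CommRing in
lemma card_of_dom (hn : 2 ≤ n) {S : Finset (Fin n)}
    (h : IsDomSet (cycleGraph n) S) : n ≤ 3 * S.card := by
  have hsub : (univ : Finset (Fin n)) ⊆ S.biUnion (fun u => {u - 1, u, u + 1}) := by
    intro v _
    obtain ⟨u, hu, hor⟩ := dom_meet_window hn h v
    refine mem_biUnion.2 ⟨u, hu, ?_⟩
    simp only [mem_insert, mem_singleton]
    rcases hor with h' | h' | h' <;> subst h'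
    · right; right; ring_nf
    · right; left; rfl
    · left; ring_nf
  calc n = (univ : Finset (Fin n)).card := by simp
    _ ≤ (S.biUnion (fun u => {u - 1, u, u + 1})).card := card_le_card hsub
    _ ≤ ∑ u ∈ S, ({u - 1, u, u + 1} : Finset (Fin n)).card := card_biUnion_le
    _ ≤ ∑ _u ∈ S, 3 := by
        refine sum_le_sum fun u _ => ?_
        refine (card_insert_le _ _).trans (Nat.succ_le_succ ?_)
        exact (card_insert_le _ _).trans (by simp)
    _ = 3 * S.card := by rw [sum_const, smul_eq_mul, mul_comm]

lemma compdom_of_card (hn : 2 ≤ n) {S : Finset (Fin n)}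
    (h : 3 ≤ S.card) : IsDomSet (cycleGraph n)ᶜ S := by
  intro v
  by_cases hv : v ∈ S
  · exact Or.inl hv
  right
  have hns : ¬ S ⊆ ({v - 1, v + 1} : Finset (Fin n)) := by
    intro hsub
    have := card_le_card hsub
    have : ({v - 1, v + 1} : Finset (Fin n)).card ≤ 2 := card_insert_le _ _
    omega
  obtain ⟨u, hu, hu2⟩ := not_subset.1 hns
  simp only [mem_insert, mem_singleton] at hu2
  push_neg at hu2
  refine ⟨u, hu, ?_⟩
  rw [compl_adj]
  refine ⟨fun h' => hv (h' ▸ hu), fun hadj => ?_⟩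
  rcases (cg_adj_iff hn).1 hadj with h' | h'
  · exact hu2.2 (by rw [h'])
  · exact hu2.1 (by rw [h'])

lemma global_of_dom (hn : 8 ≤ n) {S : Finset (Fin n)}
    (h : IsDomSet (cycleGraph n) S) : IsGlobalDomSet (cycleGraph n) S := by
  have h2 : 2 ≤ n := by omega
  have := card_of_dom h2 h
  exact ⟨h, compdom_of_card h2 (by omega)⟩

lemma not_dom_of_not_global (hn : 8 ≤ n) {S : Finset (Fin n)}
    (h : ¬ IsGlobalDomSet (cycleGraph n) S) : ¬ IsDomSet (cycleGraph n) S :=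
  fun hd => h (global_of_dom hn hd)

end CycleAux

section UBsec
variable {n : ℕ} [NeZero n]

lemma three_of_card {α : Type*} [DecidableEq α] {s : Finset α} (h : 3 ≤ s.card) :
    ∃ a b c, a ∈ s ∧ b ∈ s ∧ c ∈ s ∧ a ≠ b ∧ a ≠ c ∧ b ≠ c := by
  have h0 : 0 < s.card := by omega
  obtain ⟨a, ha⟩ := card_pos.1 h0
  have h2 : 0 < (s.erase a).card := by rw [card_erase_of_mem ha]; omega
  obtain ⟨b, hb⟩ := card_pos.1 h2
  have h3 : 0 < ((s.erase a).erase b).card := by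
    rw [card_erase_of_mem hb, card_erase_of_mem ha]; omega
  obtain ⟨c, hc⟩ := card_pos.1 h3
  obtain ⟨hcb, hc2⟩ := mem_erase.1 hc
  obtain ⟨hca, hc3⟩ := mem_erase.1 hc2
  obtain ⟨hba, hb2⟩ := mem_erase.1 hb
  exact ⟨a, b, c, ha, hb2, hc3, fun h => hba h.symm, fun h => hca h.symm, fun h => hcb h.symm⟩

variable (hn : 8 ≤ n) (π : Finpartition (Finset.univ : Finset (Fin n)))
  (hgc : IsGCPartition (cycleGraph n) π)

section inner

variable {π}

lemma pd (hgc : IsGCPartition (cycleGraph n) π) {A B : Finset (Fin n)}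
    (hA : A ∈ π.parts) (hB : B ∈ π.parts) (hne : A ≠ B) : Disjoint A B :=
  π.supIndep.pairwiseDisjoint hA hB hne

lemma FOUR (hn : 8 ≤ n) (hgc : IsGCPartition (cycleGraph n) π) (v : Fin n)
    {Q1 Q2 Q3 Q4 : Finset (Fin n)}
    (h1 : Q1 ∈ π.parts) (h2 : Q2 ∈ π.parts) (h3 : Q3 ∈ π.parts) (h4 : Q4 ∈ π.parts)
    (n12 : Q1 ≠ Q2) (n13 : Q1 ≠ Q3) (n14 : Q1 ≠ Q4)
    (n23 : Q2 ≠ Q3) (n24 : Q2 ≠ Q4) (n34 : Q3 ≠ Q4)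
    (m1 : ∃ u ∈ Q1, u = v - 1 ∨ u = v ∨ u = v + 1)
    (m2 : ∃ u ∈ Q2, u = v - 1 ∨ u = v ∨ u = v + 1)
    (m3 : ∃ u ∈ Q3, u = v - 1 ∨ u = v ∨ u = v + 1)
    (m4 : ∃ u ∈ Q4, u = v - 1 ∨ u = v ∨ u = v + 1) : False := by
  obtain ⟨u1, hu1, w1⟩ := m1
  obtain ⟨u2, hu2, w2⟩ := m2
  obtain ⟨u3, hu3, w3⟩ := m3
  obtain ⟨u4, hu4, w4⟩ := m4
  have e12 : u1 ≠ u2 := fun h => (pd hgc h1 h2 n12).forall_ne_finset hu1 hu2 h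
  have e13 : u1 ≠ u3 := fun h => (pd hgc h1 h3 n13).forall_ne_finset hu1 hu3 h
  have e14 : u1 ≠ u4 := fun h => (pd hgc h1 h4 n14).forall_ne_finset hu1 hu4 h
  have e23 : u2 ≠ u3 := fun h => (pd hgc h2 h3 n23).forall_ne_finset hu2 hu3 h
  have e24 : u2 ≠ u4 := fun h => (pd hgc h2 h4 n24).forall_ne_finset hu2 hu4 h
  have e34 : u3 ≠ u4 := fun h => (pd hgc h3 h4 n34).forall_ne_finset hu3 hu4 h
  have hsub : ({u1, u2, u3, u4} : Finset (Fin n)) ⊆ {v - 1, v, v + 1} := by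
    intro x hx
    simp only [mem_insert, mem_singleton] at hx ⊢
    rcases hx with rfl | rfl | rfl | rfl
    · rcases w1 with h | h | h <;> simp [h]
    · rcases w2 with h | h | h <;> simp [h]
    · rcases w3 with h | h | h <;> simp [h]
    · rcases w4 with h | h | h <;> simp [h]
  have hc4 : ({u1, u2, u3, u4} : Finset (Fin n)).card = 4 := by
    rw [card_insert_of_notMem (by simp [e12, e13, e14]),
        card_insert_of_notMem (by simp [e23, e24]),
        card_insert_of_notMem (by simp [e34]), card_singleton]
  have hc3 : ({v - 1, v, v + 1} : Finset (Fin n)).card ≤ 3 := by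
    refine (card_insert_le _ _).trans (Nat.succ_le_succ ?_)
    exact (card_insert_le _ _).trans (by simp)
  have := card_le_card hsub
  omega

lemma MEET (hn : 8 ≤ n) {A B : Finset (Fin n)} (hd : IsDomSet (cycleGraph n) (A ∪ B))
    {v : Fin n} (hv : (v - 1) ∉ A ∧ v ∉ A ∧ (v + 1) ∉ A) :
    ∃ u ∈ B, u = v - 1 ∨ u = v ∨ u = v + 1 := by
  obtain ⟨u, hu, w⟩ := dom_meet_window (by omega) hd v
  rcases mem_union.1 hu with hu' | hu'
  · exfalso
    rcases w with rfl | rfl | rfl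
    · exact hv.1 hu'
    · exact hv.2.1 hu'
    · exact hv.2.2 hu'
  · exact ⟨u, hu', w⟩

lemma hole_part (hn : 8 ≤ n) (hgc : IsGCPartition (cycleGraph n) π)
    {A : Finset (Fin n)} (hA : A ∈ π.parts) :
    ∃ v : Fin n, (v - 1) ∉ A ∧ v ∉ A ∧ (v + 1) ∉ A :=
  hole_of_not_dom (by omega) (not_dom_of_not_global hn (hgc A hA).1)

lemma TRIPLE (hn : 8 ≤ n) (hgc : IsGCPartition (cycleGraph n) π)
    {p1 p2 p3 p4 p5 p6 C : Finset (Fin n)}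
    (h1 : p1 ∈ π.parts) (h2 : p2 ∈ π.parts) (h3 : p3 ∈ π.parts)
    (h4 : p4 ∈ π.parts) (h5 : p5 ∈ π.parts) (h6 : p6 ∈ π.parts) (hC : C ∈ π.parts)
    (n12 : p1 ≠ p2) (n13 : p1 ≠ p3) (n14 : p1 ≠ p4) (n15 : p1 ≠ p5) (n16 : p1 ≠ p6)
    (n23 : p2 ≠ p3) (n24 : p2 ≠ p4) (n25 : p2 ≠ p5) (n26 : p2 ≠ p6)
    (n34 : p3 ≠ p4) (n35 : p3 ≠ p5) (n36 : p3 ≠ p6)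
    (n45 : p4 ≠ p5) (n46 : p4 ≠ p6)
    (n56 : p5 ≠ p6)
    (nC1 : C ≠ p1) (nC2 : C ≠ p2) (nC3 : C ≠ p3) (nC4 : C ≠ p4) (nC5 : C ≠ p5) (nC6 : C ≠ p6)
    (d1 : IsDomSet (cycleGraph n) (p1 ∪ p2))
    (d2 : IsDomSet (cycleGraph n) (p3 ∪ p4))
    (d3 : IsDomSet (cycleGraph n) (p5 ∪ p6)) : False := by
  have c1 := card_of_dom (by omega : 2 ≤ n) d1
  have c2 := card_of_dom (by omega : 2 ≤ n) d2
  have c3 := card_of_dom (by omega : 2 ≤ n) d3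
  obtain ⟨x, hx⟩ := π.nonempty_of_mem_parts hC
  have cC : 1 ≤ C.card := card_pos.2 ⟨x, hx⟩
  have D12_34 : Disjoint (p1 ∪ p2) (p3 ∪ p4) :=
    disjoint_union_left.2 ⟨disjoint_union_right.2 ⟨pd hgc h1 h3 n13, pd hgc h1 h4 n14⟩,
      disjoint_union_right.2 ⟨pd hgc h2 h3 n23, pd hgc h2 h4 n24⟩⟩
  have D12_56 : Disjoint (p1 ∪ p2) (p5 ∪ p6) :=
    disjoint_union_left.2 ⟨disjoint_union_right.2 ⟨pd hgc h1 h5 n15, pd hgc h1 h6 n16⟩,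
      disjoint_union_right.2 ⟨pd hgc h2 h5 n25, pd hgc h2 h6 n26⟩⟩
  have D34_56 : Disjoint (p3 ∪ p4) (p5 ∪ p6) :=
    disjoint_union_left.2 ⟨disjoint_union_right.2 ⟨pd hgc h3 h5 n35, pd hgc h3 h6 n36⟩,
      disjoint_union_right.2 ⟨pd hgc h4 h5 n45, pd hgc h4 h6 n46⟩⟩
  have DC5 : Disjoint (p5 ∪ p6) C :=
    disjoint_union_left.2 ⟨pd hgc h5 hC (fun h => nC5 h.symm), pd hgc h6 hC (fun h => nC6 h.symm)⟩
  have DC3 : Disjoint (p3 ∪ p4) ((p5 ∪ p6) ∪ C) := by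
    refine disjoint_union_right.2 ⟨D34_56, ?_⟩
    exact disjoint_union_left.2 ⟨pd hgc h3 hC (fun h => nC3 h.symm), pd hgc h4 hC (fun h => nC4 h.symm)⟩
  have DC1 : Disjoint (p1 ∪ p2) ((p3 ∪ p4) ∪ ((p5 ∪ p6) ∪ C)) := by
    refine disjoint_union_right.2 ⟨D12_34, disjoint_union_right.2 ⟨D12_56, ?_⟩⟩
    exact disjoint_union_left.2 ⟨pd hgc h1 hC (fun h => nC1 h.symm), pd hgc h2 hC (fun h => nC2 h.symm)⟩
  have htot : ((p1 ∪ p2) ∪ ((p3 ∪ p4) ∪ ((p5 ∪ p6) ∪ C))).card ≤ n := by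
    have := card_le_card (subset_univ ((p1 ∪ p2) ∪ ((p3 ∪ p4) ∪ ((p5 ∪ p6) ∪ C))))
    simpa using this
  rw [card_union_of_disjoint DC1, card_union_of_disjoint DC3, card_union_of_disjoint DC5] at htot
  omega

lemma STAR (hn : 8 ≤ n) (hgc : IsGCPartition (cycleGraph n) π)
    {G M : Finset (Fin n)} (hG : G ∈ π.parts) (hM : M ∈ π.parts) (hMG : M ≠ G)
    (hdom : IsDomSet (cycleGraph n) (G ∪ M))
    {Q : Finset (Finset (Fin n))} (hQ : Q ⊆ π.parts) (h3 : 3 ≤ Q.card)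
    (hQG : ∀ X ∈ Q, X ≠ G ∧ X ≠ M ∧ IsDomSet (cycleGraph n) (G ∪ X)) : False := by
  obtain ⟨v, hv⟩ := hole_part hn hgc hG
  obtain ⟨X1, X2, X3, m1, m2, m3, e12, e13, e23⟩ := three_of_card h3
  obtain ⟨x1G, x1M, d1⟩ := hQG X1 m1
  obtain ⟨x2G, x2M, d2⟩ := hQG X2 m2
  obtain ⟨x3G, x3M, d3⟩ := hQG X3 m3
  exact FOUR hn hgc v hM (hQ m1) (hQ m2) (hQ m3)
    (fun h => x1M h.symm) (fun h => x2M h.symm) (fun h => x3M h.symm) e12 e13 e23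
    (MEET hn hdom hv) (MEET hn d1 hv) (MEET hn d2 hv) (MEET hn d3 hv)

lemma CROSS (hn : 8 ≤ n) (hgc : IsGCPartition (cycleGraph n) π)
    {G M C D X X' : Finset (Fin n)}
    (hG : G ∈ π.parts) (hM : M ∈ π.parts) (hC : C ∈ π.parts) (hD : D ∈ π.parts)
    (hX : X ∈ π.parts) (hX' : X' ∈ π.parts)
    (nMG : M ≠ G) (nMC : M ≠ C) (nMD : M ≠ D)
    (nXX' : X ≠ X')
    (nXM : X ≠ M) (nXC : X ≠ C) (nXD : X ≠ D)
    (nX'M : X' ≠ M) (nX'C : X' ≠ C) (nX'D : X' ≠ D)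
    (dGM : IsDomSet (cycleGraph n) (G ∪ M))
    (dCD : IsDomSet (cycleGraph n) (C ∪ D))
    (dGX : IsDomSet (cycleGraph n) (G ∪ X))
    (dGX' : IsDomSet (cycleGraph n) (G ∪ X')) : False := by
  obtain ⟨v, hv⟩ := hole_part hn hgc hG
  obtain ⟨u, hu, w⟩ := dom_meet_window (by omega : 2 ≤ n) dCD v
  rcases mem_union.1 hu with huC | huD
  · exact FOUR hn hgc v hM hX hX' hC (fun h => nXM h.symm) (fun h => nX'M h.symm) nMC
      nXX' nXC nX'C (MEET hn dGM hv) (MEET hn dGX hv) (MEET hn dGX' hv) ⟨u, huC, w⟩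
  · exact FOUR hn hgc v hM hX hX' hD (fun h => nXM h.symm) (fun h => nX'M h.symm) nMD
      nXX' nXD nX'D (MEET hn dGM hv) (MEET hn dGX hv) (MEET hn dGX' hv) ⟨u, huD, w⟩

theorem UB_main (hn : 8 ≤ n) (hgc : IsGCPartition (cycleGraph n) π) :
    π.parts.card ≤ 6 := by
  classical
  by_contra hcard
  push_neg at hcard
  have h7 : 7 ≤ π.parts.card := hcard
  -- every part has a linked partner
  have hpartner : ∀ A ∈ π.parts, ∃ B ∈ π.parts, B ≠ A ∧
      IsDomSet (cycleGraph n) (A ∪ B) := by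
    intro A hA
    obtain ⟨B, hB, hne, hco⟩ := (hgc A hA).2
    exact ⟨B, hB, hne, hco.2.2.2.1⟩
  obtain ⟨A1, hA1⟩ := card_pos.1 (show 0 < π.parts.card by omega)
  obtain ⟨B1, hB1, nB1A1, dom1⟩ := hpartner A1 hA1
  by_cases h2 : ∃ A B : Finset (Fin n), A ∈ π.parts ∧ B ∈ π.parts ∧ A ≠ B ∧
      IsDomSet (cycleGraph n) (A ∪ B) ∧ A ≠ A1 ∧ A ≠ B1 ∧ B ≠ A1 ∧ B ≠ B1
  · obtain ⟨A2, B2, hA2, hB2, nA2B2, dom2, nA2A1, nA2B1, nB2A1, nB2B1⟩ := h2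
    set F4 : Finset (Finset (Fin n)) := {A1, B1, A2, B2} with hF4
    by_cases h3 : ∃ A B : Finset (Fin n), A ∈ π.parts ∧ B ∈ π.parts ∧ A ≠ B ∧
        IsDomSet (cycleGraph n) (A ∪ B) ∧ A ∉ F4 ∧ B ∉ F4
    · -- three disjoint linked pairs + a 7th part
      obtain ⟨A3, B3, hA3, hB3, nA3B3, dom3, nA3F, nB3F⟩ := h3
      simp only [hF4, mem_insert, mem_singleton, not_or] at nA3F nB3F
      obtain ⟨nA3A1, nA3B1, nA3A2, nA3B2⟩ := nA3F
      obtain ⟨nB3A1, nB3B1, nB3A2, nB3B2⟩ := nB3F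
      have hsix : ({A1, B1, A2, B2, A3, B3} : Finset (Finset (Fin n))).card ≤ 6 := by
        refine (card_insert_le _ _).trans (Nat.succ_le_succ ?_)
        refine (card_insert_le _ _).trans (Nat.succ_le_succ ?_)
        refine (card_insert_le _ _).trans (Nat.succ_le_succ ?_)
        refine (card_insert_le _ _).trans (Nat.succ_le_succ ?_)
        exact (card_insert_le _ _).trans (by simp)
      have hdiff : 0 < (π.parts \ {A1, B1, A2, B2, A3, B3}).card := by
        have := le_card_sdiff ({A1, B1, A2, B2, A3, B3} : Finset (Finset (Fin n))) π.parts
        omega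
      obtain ⟨C, hCmem⟩ := card_pos.1 hdiff
      obtain ⟨hCP, hCn⟩ := mem_sdiff.1 hCmem
      simp only [mem_insert, mem_singleton, not_or] at hCn
      obtain ⟨nCA1, nCB1, nCA2, nCB2, nCA3, nCB3⟩ := hCn
      exact TRIPLE hn hgc hA1 hB1 hA2 hB2 hA3 hB3 hCP
        (fun h => nB1A1 h.symm) nA2A1.symm nB2A1.symm (Ne.symm nA3A1) (Ne.symm nB3A1)
        nA2B1.symm nB2B1.symm (Ne.symm nA3B1) (Ne.symm nB3B1)
        nA2B2 (Ne.symm nA3A2) (Ne.symm nB3A2)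
        (Ne.symm nA3B2) (Ne.symm nB3B2)
        nA3B3
        nCA1 nCB1 nCA2 nCB2 nCA3 nCB3 dom1 dom2 dom3
    · -- every linked pair meets F4
      have hO3 : 3 ≤ (π.parts \ F4).card := by
        have h4 : F4.card ≤ 4 := by
          refine (card_insert_le _ _).trans (Nat.succ_le_succ ?_)
          refine (card_insert_le _ _).trans (Nat.succ_le_succ ?_)
          exact (card_insert_le _ _).trans (by simp)
        have := le_card_sdiff F4 π.parts
        omega
      set O := π.parts \ F4 with hO
      have hOpart : ∀ X ∈ O, X ∈ π.parts ∧ X ≠ A1 ∧ X ≠ B1 ∧ X ≠ A2 ∧ X ≠ B2 := by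
        intro X hX
        obtain ⟨hXP, hXn⟩ := mem_sdiff.1 hX
        simp only [hF4, mem_insert, mem_singleton, not_or] at hXn
        exact ⟨hXP, hXn.1, hXn.2.1, hXn.2.2.1, hXn.2.2.2⟩
      -- each X in O is linked to a member of F4
      have hlink : ∀ X ∈ O, ∃ Y ∈ F4, Y ≠ X ∧ IsDomSet (cycleGraph n) (X ∪ Y) := by
        intro X hX
        obtain ⟨hXP, hXn1, hXn2, hXn3, hXn4⟩ := hOpart X hX
        obtain ⟨Y, hYP, hYX, hdXY⟩ := hpartner X hXP
        by_cases hYF : Y ∈ F4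
        · exact ⟨Y, hYF, hYX, hdXY⟩
        · exfalso
          refine h3 ⟨X, Y, hXP, hYP, fun h => hYX h.symm, hdXY, ?_, hYF⟩
          simp only [hF4, mem_insert, mem_singleton, not_or]
          exact ⟨hXn1, hXn2, hXn3, hXn4⟩
      by_cases h4 : ∃ G ∈ F4, ∃ X ∈ O, ∃ X' ∈ O, X ≠ X' ∧
          IsDomSet (cycleGraph n) (G ∪ X) ∧ IsDomSet (cycleGraph n) (G ∪ X')
      · -- some member of F4 has two partners outside: CROSS
        obtain ⟨G, hGF, X, hXO, X', hX'O, nXX', dGX, dGX'⟩ := h4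
        obtain ⟨hXP, nX1, nX2, nX3, nX4⟩ := hOpart X hXO
        obtain ⟨hX'P, nX'1, nX'2, nX'3, nX'4⟩ := hOpart X' hX'O
        simp only [hF4, mem_insert, mem_singleton] at hGF
        have dom1' : IsDomSet (cycleGraph n) (B1 ∪ A1) := by rwa [union_comm] at dom1
        have dom2' : IsDomSet (cycleGraph n) (B2 ∪ A2) := by rwa [union_comm] at dom2
        rcases hGF with rfl | rfl | rfl | rfl
        · exact CROSS hn hgc hA1 hB1 hA2 hB2 hXP hX'P nB1A1 nA2B1.symm nB2B1.symm
            nXX' nX2 nX3 nX4 nX'2 nX'3 nX'4 dom1 dom2 dGX dGX'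
        · exact CROSS hn hgc hB1 hA1 hA2 hB2 hXP hX'P nB1A1.symm nA2A1.symm nB2A1.symm
            nXX' nX1 nX3 nX4 nX'1 nX'3 nX'4 dom1' dom2 dGX dGX'
        · exact CROSS hn hgc hA2 hB2 hA1 hB1 hXP hX'P nA2B2.symm nB2A1 nB2B1
            nXX' nX4 nX1 nX2 nX'4 nX'1 nX'2 dom2 dom1 dGX dGX'
        · exact CROSS hn hgc hB2 hA2 hA1 hB1 hXP hX'P nA2B2 nA2A1 nA2B1
            nXX' nX3 nX1 nX2 nX'3 nX'1 nX'2 dom2' dom1 dGX dGX'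
      · -- injective partner assignment: three disjoint pairs + leftover
        obtain ⟨X1, X2, X3, m1, m2, m3, e12, e13, e23⟩ := three_of_card hO3
        obtain ⟨Y1, hY1F, hY1X, d1⟩ := hlink X1 m1
        obtain ⟨Y2, hY2F, hY2X, d2⟩ := hlink X2 m2
        obtain ⟨Y3, hY3F, hY3X, d3⟩ := hlink X3 m3
        have hcomm : ∀ {X Y : Finset (Fin n)}, IsDomSet (cycleGraph n) (X ∪ Y) →
            IsDomSet (cycleGraph n) (Y ∪ X) := fun h => by rwa [union_comm] at h
        have nY12 : Y1 ≠ Y2 := by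
          intro h
          exact h4 ⟨Y1, hY1F, X1, m1, X2, m2, e12, hcomm d1, h ▸ hcomm d2⟩
        have nY13 : Y1 ≠ Y3 := by
          intro h
          exact h4 ⟨Y1, hY1F, X1, m1, X3, m3, e13, hcomm d1, h ▸ hcomm d3⟩
        have nY23 : Y2 ≠ Y3 := by
          intro h
          exact h4 ⟨Y2, hY2F, X2, m2, X3, m3, e23, hcomm d2, h ▸ hcomm d3⟩
        have hF4P : ∀ Z ∈ F4, Z ∈ π.parts := by
          intro Z hZ
          simp only [hF4, mem_insert, mem_singleton] at hZ
          rcases hZ with rfl | rfl | rfl | rfl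
          exacts [hA1, hB1, hA2, hB2]
        have hc4 : F4.card = 4 := by
          rw [hF4, card_insert_of_notMem (by simp [nB1A1.symm, nA2A1.symm, nB2A1.symm]),
              card_insert_of_notMem (by simp [nA2B1.symm, nB2B1.symm]),
              card_insert_of_notMem (by simp [nA2B2]), card_singleton]
        have hcY : ({Y1, Y2, Y3} : Finset (Finset (Fin n))).card ≤ 3 := by
          refine (card_insert_le _ _).trans (Nat.succ_le_succ ?_)
          exact (card_insert_le _ _).trans (by simp)
        have hpos : 0 < (F4 \ {Y1, Y2, Y3}).card := by
          have := le_card_sdiff ({Y1, Y2, Y3} : Finset (Finset (Fin n))) F4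
          omega
        obtain ⟨G4, hG4mem⟩ := card_pos.1 hpos
        obtain ⟨hG4F, hG4nY⟩ := mem_sdiff.1 hG4mem
        simp only [mem_insert, mem_singleton, not_or] at hG4nY
        obtain ⟨nG4Y1, nG4Y2, nG4Y3⟩ := hG4nY
        have hXF : ∀ {X : Finset (Fin n)}, X ∈ O → ∀ {Z : Finset (Fin n)}, Z ∈ F4 → X ≠ Z := by
          intro X hX Z hZ h
          subst h
          exact (mem_sdiff.1 hX).2 hZ
        exact TRIPLE hn hgc (hOpart X1 m1).1 (hF4P Y1 hY1F) (hOpart X2 m2).1 (hF4P Y2 hY2F)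
          (hOpart X3 m3).1 (hF4P Y3 hY3F) (hF4P G4 hG4F)
          hY1X.symm e12 (hXF m1 hY2F) e13 (hXF m1 hY3F)
          (hXF m2 hY1F).symm nY12 (hXF m3 hY1F).symm nY13
          hY2X.symm e23 (hXF m2 hY3F)
          (hXF m3 hY2F).symm nY23
          hY3X.symm
          (fun h => hXF m1 hG4F h.symm) nG4Y1 (fun h => hXF m2 hG4F h.symm) nG4Y2
          (fun h => hXF m3 hG4F h.symm) nG4Y3
          d1 d2 d3
  · -- all linked pairs meet {A1, B1}
    have hO5 : 5 ≤ (π.parts \ {A1, B1}).card := by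
      have hc2 : ({A1, B1} : Finset (Finset (Fin n))).card ≤ 2 := card_insert_le _ _ |>.trans (by simp)
      have := le_card_sdiff ({A1, B1} : Finset (Finset (Fin n))) π.parts
      omega
    set O := π.parts \ {A1, B1} with hO
    have hlink : ∀ X ∈ O, IsDomSet (cycleGraph n) (A1 ∪ X) ∨ IsDomSet (cycleGraph n) (B1 ∪ X) := by
      intro X hX
      obtain ⟨hXP, hXn⟩ := mem_sdiff.1 hX
      simp only [mem_insert, mem_singleton, not_or] at hXn
      obtain ⟨Y, hYP, hYX, hdXY⟩ := hpartner X hXP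
      by_cases hYA : Y = A1
      · left; subst hYA; rwa [union_comm] at hdXY
      by_cases hYB : Y = B1
      · right; subst hYB; rwa [union_comm] at hdXY
      · exfalso
        exact h2 ⟨X, Y, hXP, hYP, fun h => hYX h.symm, hdXY, hXn.1, hXn.2, hYA, hYB⟩
    set QA := O.filter (fun X => IsDomSet (cycleGraph n) (A1 ∪ X)) with hQA
    set QB := O.filter (fun X => IsDomSet (cycleGraph n) (B1 ∪ X)) with hQB
    have hsub : O ⊆ QA ∪ QB := by
      intro X hX
      rcases hlink X hX with h | h
      · exact mem_union_left _ (mem_filter.2 ⟨hX, h⟩)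
      · exact mem_union_right _ (mem_filter.2 ⟨hX, h⟩)
    have hone : 3 ≤ QA.card ∨ 3 ≤ QB.card := by
      have h1 := card_le_card hsub
      have h2' := card_union_le QA QB
      omega
    have hmemO : ∀ {X : Finset (Fin n)}, X ∈ O → X ∈ π.parts ∧ X ≠ A1 ∧ X ≠ B1 := by
      intro X hX
      obtain ⟨hXP, hXn⟩ := mem_sdiff.1 hX
      simp only [mem_insert, mem_singleton, not_or] at hXn
      exact ⟨hXP, hXn.1, hXn.2⟩
    rcases hone with h3Q | h3Q
    · refine STAR hn hgc hA1 hB1 nB1A1 dom1 ((filter_subset _ _).trans sdiff_subset) h3Q ?_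
      intro X hX
      obtain ⟨hXO, hdom⟩ := mem_filter.1 hX
      exact ⟨(hmemO hXO).2.1, (hmemO hXO).2.2, hdom⟩
    · refine STAR hn hgc hB1 hA1 nB1A1.symm (by rwa [union_comm] at dom1)
        ((filter_subset _ _).trans sdiff_subset) h3Q ?_
      intro X hX
      obtain ⟨hXO, hdom⟩ := mem_filter.1 hX
      exact ⟨(hmemO hXO).2.2, (hmemO hXO).2.1, hdom⟩

end inner
end UBsec


section LB
variable {n : ℕ} [NeZero n]

lemma mkdisj {Q R : ℕ → Prop} [DecidablePred Q] [DecidablePred R]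
    (h : ∀ k, ¬ (Q k ∧ R k)) : Disjoint (FS n Q) (FS n R) :=
  disjoint_left.2 (by intro a ha hb; exact absurd ⟨mem_FS.1 ha, mem_FS.1 hb⟩ (h a.val))

lemma ne_of_disj {A B : Finset (Fin n)} (hA : A.Nonempty) (hd : Disjoint A B) : A ≠ B := by
  intro h
  subst h
  exact hA.ne_empty (disjoint_self.1 hd)

lemma build_gc6 (hn : 8 ≤ n)
    (Q0 Q1 Q2 Q3 Q4 Q5 : ℕ → Prop)
    [DecidablePred Q0] [DecidablePred Q1] [DecidablePred Q2]
    [DecidablePred Q3] [DecidablePred Q4] [DecidablePred Q5]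
    (hcov : ∀ k, k < n → Q0 k ∨ Q1 k ∨ Q2 k ∨ Q3 k ∨ Q4 k ∨ Q5 k)
    (hdisj : ∀ k,
      ¬(Q0 k ∧ Q1 k) ∧ ¬(Q0 k ∧ Q2 k) ∧ ¬(Q0 k ∧ Q3 k) ∧ ¬(Q0 k ∧ Q4 k) ∧ ¬(Q0 k ∧ Q5 k) ∧
      ¬(Q1 k ∧ Q2 k) ∧ ¬(Q1 k ∧ Q3 k) ∧ ¬(Q1 k ∧ Q4 k) ∧ ¬(Q1 k ∧ Q5 k) ∧
      ¬(Q2 k ∧ Q3 k) ∧ ¬(Q2 k ∧ Q4 k) ∧ ¬(Q2 k ∧ Q5 k) ∧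
      ¬(Q3 k ∧ Q4 k) ∧ ¬(Q3 k ∧ Q5 k) ∧ ¬(Q4 k ∧ Q5 k))
    (hne0 : ∃ k, k < n ∧ Q0 k) (hne1 : ∃ k, k < n ∧ Q1 k) (hne2 : ∃ k, k < n ∧ Q2 k)
    (hne3 : ∃ k, k < n ∧ Q3 k) (hne4 : ∃ k, k < n ∧ Q4 k) (hne5 : ∃ k, k < n ∧ Q5 k)
    (hw0 : ∃ k, 1 ≤ k ∧ k + 1 < n ∧ ¬Q0 (k-1) ∧ ¬Q0 k ∧ ¬Q0 (k+1))
    (hw1 : ∃ k, 1 ≤ k ∧ k + 1 < n ∧ ¬Q1 (k-1) ∧ ¬Q1 k ∧ ¬Q1 (k+1))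
    (hw2 : ∃ k, 1 ≤ k ∧ k + 1 < n ∧ ¬Q2 (k-1) ∧ ¬Q2 k ∧ ¬Q2 (k+1))
    (hw3 : ∃ k, 1 ≤ k ∧ k + 1 < n ∧ ¬Q3 (k-1) ∧ ¬Q3 k ∧ ¬Q3 (k+1))
    (hw4 : ∃ k, 1 ≤ k ∧ k + 1 < n ∧ ¬Q4 (k-1) ∧ ¬Q4 k ∧ ¬Q4 (k+1))
    (hw5 : ∃ k, 1 ≤ k ∧ k + 1 < n ∧ ¬Q5 (k-1) ∧ ¬Q5 k ∧ ¬Q5 (k+1))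
    (hD03 : NatDom n (fun k => Q0 k ∨ Q3 k))
    (hD13 : NatDom n (fun k => Q1 k ∨ Q3 k))
    (hD23 : NatDom n (fun k => Q2 k ∨ Q3 k))
    (hD04 : NatDom n (fun k => Q0 k ∨ Q4 k))
    (hD5 : NatDom n (fun k => Q0 k ∨ Q5 k) ∨ NatDom n (fun k => Q1 k ∨ Q5 k)) :
    ∃ π : Finpartition (Finset.univ : Finset (Fin n)),
      IsGCPartition (cycleGraph n) π ∧ π.parts.card = 6 := by
  have h2 : 2 ≤ n := by omega
  set A0 := FS n Q0 with hA0
  set A1 := FS n Q1 with hA1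
  set A2 := FS n Q2 with hA2
  set A3 := FS n Q3 with hA3
  set A4 := FS n Q4 with hA4
  set A5 := FS n Q5 with hA5
  -- disjointness
  have d01 : Disjoint A0 A1 := mkdisj (fun k => (hdisj k).1)
  have d02 : Disjoint A0 A2 := mkdisj (fun k => (hdisj k).2.1)
  have d03 : Disjoint A0 A3 := mkdisj (fun k => (hdisj k).2.2.1)
  have d04 : Disjoint A0 A4 := mkdisj (fun k => (hdisj k).2.2.2.1)
  have d05 : Disjoint A0 A5 := mkdisj (fun k => (hdisj k).2.2.2.2.1)
  have d12 : Disjoint A1 A2 := mkdisj (fun k => (hdisj k).2.2.2.2.2.1)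
  have d13 : Disjoint A1 A3 := mkdisj (fun k => (hdisj k).2.2.2.2.2.2.1)
  have d14 : Disjoint A1 A4 := mkdisj (fun k => (hdisj k).2.2.2.2.2.2.2.1)
  have d15 : Disjoint A1 A5 := mkdisj (fun k => (hdisj k).2.2.2.2.2.2.2.2.1)
  have d23 : Disjoint A2 A3 := mkdisj (fun k => (hdisj k).2.2.2.2.2.2.2.2.2.1)
  have d24 : Disjoint A2 A4 := mkdisj (fun k => (hdisj k).2.2.2.2.2.2.2.2.2.2.1)
  have d25 : Disjoint A2 A5 := mkdisj (fun k => (hdisj k).2.2.2.2.2.2.2.2.2.2.2.1)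
  have d34 : Disjoint A3 A4 := mkdisj (fun k => (hdisj k).2.2.2.2.2.2.2.2.2.2.2.2.1)
  have d35 : Disjoint A3 A5 := mkdisj (fun k => (hdisj k).2.2.2.2.2.2.2.2.2.2.2.2.2.1)
  have d45 : Disjoint A4 A5 := mkdisj (fun k => (hdisj k).2.2.2.2.2.2.2.2.2.2.2.2.2.2)
  -- nonempty
  have mkne : ∀ (Q : ℕ → Prop) [DecidablePred Q], (∃ k, k < n ∧ Q k) → (FS n Q).Nonempty := by
    intro Q _ ⟨k, hk, hq⟩
    exact ⟨⟨k, hk⟩, mem_FS.2 hq⟩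
  have ne0 : A0.Nonempty := mkne Q0 hne0
  have ne1 : A1.Nonempty := mkne Q1 hne1
  have ne2 : A2.Nonempty := mkne Q2 hne2
  have ne3 : A3.Nonempty := mkne Q3 hne3
  have ne4 : A4.Nonempty := mkne Q4 hne4
  have ne5 : A5.Nonempty := mkne Q5 hne5
  have e01 : A0 ≠ A1 := ne_of_disj ne0 d01
  have e02 : A0 ≠ A2 := ne_of_disj ne0 d02
  have e03 : A0 ≠ A3 := ne_of_disj ne0 d03
  have e04 : A0 ≠ A4 := ne_of_disj ne0 d04
  have e05 : A0 ≠ A5 := ne_of_disj ne0 d05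
  have e12 : A1 ≠ A2 := ne_of_disj ne1 d12
  have e13 : A1 ≠ A3 := ne_of_disj ne1 d13
  have e14 : A1 ≠ A4 := ne_of_disj ne1 d14
  have e15 : A1 ≠ A5 := ne_of_disj ne1 d15
  have e23 : A2 ≠ A3 := ne_of_disj ne2 d23
  have e24 : A2 ≠ A4 := ne_of_disj ne2 d24
  have e25 : A2 ≠ A5 := ne_of_disj ne2 d25
  have e34 : A3 ≠ A4 := ne_of_disj ne3 d34
  have e35 : A3 ≠ A5 := ne_of_disj ne3 d35
  have e45 : A4 ≠ A5 := ne_of_disj ne4 d45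
  -- non-domination of parts
  have mknd : ∀ (Q : ℕ → Prop) [DecidablePred Q],
      (∃ k, 1 ≤ k ∧ k + 1 < n ∧ ¬Q (k-1) ∧ ¬Q k ∧ ¬Q (k+1)) →
      ¬ IsGlobalDomSet (cycleGraph n) (FS n Q) := by
    intro Q _ ⟨k, hk1, hk2, hq⟩ hg
    exact not_dom_FS h2 k hk1 hk2 hq hg.1
  have ng0 : ¬ IsGlobalDomSet (cycleGraph n) A0 := mknd Q0 hw0
  have ng1 : ¬ IsGlobalDomSet (cycleGraph n) A1 := mknd Q1 hw1
  have ng2 : ¬ IsGlobalDomSet (cycleGraph n) A2 := mknd Q2 hw2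
  have ng3 : ¬ IsGlobalDomSet (cycleGraph n) A3 := mknd Q3 hw3
  have ng4 : ¬ IsGlobalDomSet (cycleGraph n) A4 := mknd Q4 hw4
  have ng5 : ¬ IsGlobalDomSet (cycleGraph n) A5 := mknd Q5 hw5
  -- global domination of designated unions
  have g03 : IsGlobalDomSet (cycleGraph n) (A0 ∪ A3) := by
    rw [hA0, hA3, FS_union]
    exact global_of_dom hn ((isDom_FS_iff h2).2 hD03)
  have g13 : IsGlobalDomSet (cycleGraph n) (A1 ∪ A3) := by
    rw [hA1, hA3, FS_union]
    exact global_of_dom hn ((isDom_FS_iff h2).2 hD13)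
  have g23 : IsGlobalDomSet (cycleGraph n) (A2 ∪ A3) := by
    rw [hA2, hA3, FS_union]
    exact global_of_dom hn ((isDom_FS_iff h2).2 hD23)
  have g04 : IsGlobalDomSet (cycleGraph n) (A0 ∪ A4) := by
    rw [hA0, hA4, FS_union]
    exact global_of_dom hn ((isDom_FS_iff h2).2 hD04)
  -- the partition
  refine ⟨⟨{A0, A1, A2, A3, A4, A5}, ?_, ?_, ?_⟩, ?_, ?_⟩
  · rw [Finset.supIndep_iff_pairwiseDisjoint]
    intro a ha b hb hab
    simp only [coe_insert, Set.mem_insert_iff, coe_singleton, Set.mem_singleton_iff] at ha hb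
    rcases ha with rfl | rfl | rfl | rfl | rfl | rfl <;>
      rcases hb with rfl | rfl | rfl | rfl | rfl | rfl <;>
      first
        | exact absurd rfl hab
        | exact d01 | exact d02 | exact d03 | exact d04 | exact d05
        | exact d12 | exact d13 | exact d14 | exact d15
        | exact d23 | exact d24 | exact d25
        | exact d34 | exact d35 | exact d45
        | exact d01.symm | exact d02.symm | exact d03.symm | exact d04.symm | exact d05.symm
        | exact d12.symm | exact d13.symm | exact d14.symm | exact d15.symm
        | exact d23.symm | exact d24.symm | exact d25.symm
        | exact d34.symm | exact d35.symm | exact d45.symm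
  · apply Finset.eq_univ_of_forall
    intro v
    rw [Finset.mem_sup]
    rcases hcov v.val v.isLt with h | h | h | h | h | h
    · exact ⟨A0, by simp, mem_FS.2 h⟩
    · exact ⟨A1, by simp, mem_FS.2 h⟩
    · exact ⟨A2, by simp, mem_FS.2 h⟩
    · exact ⟨A3, by simp, mem_FS.2 h⟩
    · exact ⟨A4, by simp, mem_FS.2 h⟩
    · exact ⟨A5, by simp, mem_FS.2 h⟩
  · simp only [mem_insert, mem_singleton, not_or]
    refine ⟨?_, ?_, ?_, ?_, ?_, ?_⟩ <;>
      first
        | exact fun h => ne0.ne_empty h.symm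
        | exact fun h => ne1.ne_empty h.symm
        | exact fun h => ne2.ne_empty h.symm
        | exact fun h => ne3.ne_empty h.symm
        | exact fun h => ne4.ne_empty h.symm
        | exact fun h => ne5.ne_empty h.symm
  · -- IsGCPartition
    intro A hA
    simp only [mem_insert, mem_singleton] at hA
    have mem0 : A0 ∈ ({A0, A1, A2, A3, A4, A5} : Finset (Finset (Fin n))) := by simp
    have mem1 : A1 ∈ ({A0, A1, A2, A3, A4, A5} : Finset (Finset (Fin n))) := by simp
    have mem3 : A3 ∈ ({A0, A1, A2, A3, A4, A5} : Finset (Finset (Fin n))) := by simp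
    rcases hA with rfl | rfl | rfl | rfl | rfl | rfl
    · exact ⟨ng0, A3, mem3, e03.symm, d03, ng0, ng3, g03⟩
    · exact ⟨ng1, A3, mem3, e13.symm, d13, ng1, ng3, g13⟩
    · exact ⟨ng2, A3, mem3, e23.symm, d23, ng2, ng3, g23⟩
    · exact ⟨ng3, A0, mem0, e03, d03.symm, ng3, ng0, by rwa [union_comm] at g03⟩
    · exact ⟨ng4, A0, mem0, e04, d04.symm, ng4, ng0, by rwa [union_comm] at g04⟩
    · rcases hD5 with hD | hD
      · refine ⟨ng5, A0, mem0, e05, d05.symm, ng5, ng0, ?_⟩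
        rw [union_comm, hA0, hA5, FS_union]
        exact global_of_dom hn ((isDom_FS_iff h2).2 hD)
      · refine ⟨ng5, A1, mem1, e15, d15.symm, ng5, ng1, ?_⟩
        rw [union_comm, hA1, hA5, FS_union]
        exact global_of_dom hn ((isDom_FS_iff h2).2 hD)
  · -- card = 6
    rw [card_insert_of_notMem (by simp [e01, e02, e03, e04, e05]),
        card_insert_of_notMem (by simp [e12, e13, e14, e15]),
        card_insert_of_notMem (by simp [e23, e24, e25]),
        card_insert_of_notMem (by simp [e34, e35]),
        card_insert_of_notMem (by simp [e45]), card_singleton]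

lemma exists_gc6 (hn : 8 ≤ n) :
    ∃ π : Finpartition (Finset.univ : Finset (Fin n)),
      IsGCPartition (cycleGraph n) π ∧ π.parts.card = 6 := by
  have h2 : 2 ≤ n := by omega
  have hr : n % 3 = 1 ∨ (n % 3 = 0 ∨ n % 3 = 2) := by omega
  rcases hr with hr | hr
  · -- n ≡ 1 (mod 3), n ≥ 10
    refine build_gc6 hn
      (fun k => (k ≤ n - 7 ∧ k % 3 = 0) ∨ k = n - 5)
      (fun k => k ≤ n - 7 ∧ k % 3 = 1)
      (fun k => k ≤ n - 7 ∧ k % 3 = 2)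
      (fun k => k = n - 6 ∨ k = n - 4 ∨ k = n - 1)
      (fun k => k = n - 3)
      (fun k => k = n - 2)
      (fun k hk => by omega)
      (fun k => by omega)
      ⟨0, by omega⟩ ⟨1, by omega⟩ ⟨2, by omega⟩ ⟨n - 1, by omega⟩
      ⟨n - 3, by omega⟩ ⟨n - 2, by omega⟩
      ⟨n - 3, by omega⟩ ⟨n - 3, by omega⟩ ⟨n - 3, by omega⟩
      ⟨1, by omega⟩ ⟨1, by omega⟩ ⟨1, by omega⟩
      (natDom_of h2 (by omega) (by omega) (fun k h1 h2 => by omega))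
      (natDom_of h2 (by omega) (by omega) (fun k h1 h2 => by omega))
      (natDom_of h2 (by omega) (by omega) (fun k h1 h2 => by omega))
      (natDom_of h2 (by omega) (by omega) (fun k h1 h2 => by omega))
      (Or.inl (natDom_of h2 (by omega) (by omega) (fun k h1 h2 => by omega)))
  · -- n ≡ 0 or 2 (mod 3)
    refine build_gc6 hn
      (fun k => k ≤ n - 5 ∧ k % 3 = 0)
      (fun k => k ≤ n - 5 ∧ k % 3 = 1)
      (fun k => k ≤ n - 5 ∧ k % 3 = 2)
      (fun k => k = n - 4 ∨ k = n - 1)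
      (fun k => k = n - 3)
      (fun k => k = n - 2)
      (fun k hk => by omega)
      (fun k => by omega)
      ⟨0, by omega⟩ ⟨1, by omega⟩ ⟨2, by omega⟩ ⟨n - 1, by omega⟩
      ⟨n - 3, by omega⟩ ⟨n - 2, by omega⟩
      ⟨n - 3, by omega⟩ ⟨n - 3, by omega⟩ ⟨n - 3, by omega⟩
      ⟨1, by omega⟩ ⟨1, by omega⟩ ⟨1, by omega⟩
      (natDom_of h2 (by omega) (by omega) (fun k h1 h2 => by omega))
      (natDom_of h2 (by omega) (by omega) (fun k h1 h2 => by omega))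
      (natDom_of h2 (by omega) (by omega) (fun k h1 h2 => by omega))
      (natDom_of h2 (by omega) (by omega) (fun k h1 h2 => by omega))
      ?_
    rcases hr with hr | hr
    · exact Or.inr (natDom_of h2 (by omega) (by omega) (fun k h1 h2 => by omega))
    · exact Or.inl (natDom_of h2 (by omega) (by omega) (fun k h1 h2 => by omega))
end LB


def mkFP {k : ℕ} (parts : Finset (Finset (Fin k)))
    (h1 : ∀ i ∈ parts, Disjoint i ((parts.erase i).sup id))
    (h2 : parts.sup id = univ) (h3 : ⊥ ∉ parts) : Finpartition (univ : Finset (Fin k)) :=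
  ⟨parts, Finset.supIndep_iff_disjoint_erase.2 h1, h2, h3⟩

def P3 : Finpartition (univ : Finset (Fin 3)) := mkFP {{0}, {1, 2}} (by decide) (by decide) (by decide)
def P4 : Finpartition (univ : Finset (Fin 4)) := mkFP {{0}, {1}, {2}, {3}} (by decide) (by decide) (by decide)
def P5 : Finpartition (univ : Finset (Fin 5)) := mkFP {{0}, {1}, {2}, {3, 4}} (by decide) (by decide) (by decide)
def P6 : Finpartition (univ : Finset (Fin 6)) := mkFP {{0}, {1}, {2}, {3}, {4}, {5}} (by decide) (by decide) (by decide)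
def P7 : Finpartition (univ : Finset (Fin 7)) := mkFP {{0, 3}, {1, 2}, {4}, {5}, {6}} (by decide) (by decide) (by decide)



lemma GC_eq {G : SimpleGraph V} {k : ℕ}
    (hmem : ∃ π : Finpartition (Finset.univ : Finset V), IsGCPartition G π ∧ π.parts.card = k)
    (hub : ∀ m, (∃ π : Finpartition (Finset.univ : Finset V),
      IsGCPartition G π ∧ π.parts.card = m) → m ≤ k) :
    globalCoalitionNumber G = k := by
  refine le_antisymm (csSup_le ⟨k, hmem⟩ (fun m hm => hub m hm)) (le_csSup ⟨k, ?_⟩ hmem)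
  intro m hm
  exact hub m hm

lemma part_card_le (π : Finpartition (univ : Finset V)) {A : Finset V} (hA : A ∈ π.parts) :
    A.card + (π.parts.card - 1) ≤ Fintype.card V := by
  have hsum := π.sum_card_parts
  have h1 : ∑ i ∈ π.parts.erase A, i.card + A.card = ∑ i ∈ π.parts, i.card :=
    Finset.sum_erase_add _ _ hA
  have h2 : (π.parts.erase A).card ≤ ∑ i ∈ π.parts.erase A, i.card := by
    rw [card_eq_sum_ones]
    refine sum_le_sum fun i hi => ?_
    exact card_pos.2 (π.nonempty_of_mem_parts (mem_of_mem_erase hi))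
  have h3 : (π.parts.erase A).card = π.parts.card - 1 := card_erase_of_mem hA
  have h4 : (univ : Finset V).card = Fintype.card V := card_univ
  omega

lemma two_parts_card_le (π : Finpartition (univ : Finset V)) {A B : Finset V}
    (hA : A ∈ π.parts) (hB : B ∈ π.parts) (hne : A ≠ B) :
    A.card + B.card + (π.parts.card - 2) ≤ Fintype.card V := by
  have hsum := π.sum_card_parts
  have hB' : B ∈ π.parts.erase A := mem_erase.2 ⟨hne.symm, hB⟩
  have h1 : ∑ i ∈ π.parts.erase A, i.card + A.card = ∑ i ∈ π.parts, i.card :=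
    Finset.sum_erase_add _ _ hA
  have h1' : ∑ i ∈ (π.parts.erase A).erase B, i.card + B.card = ∑ i ∈ π.parts.erase A, i.card :=
    Finset.sum_erase_add _ _ hB'
  have h2 : ((π.parts.erase A).erase B).card ≤ ∑ i ∈ (π.parts.erase A).erase B, i.card := by
    rw [card_eq_sum_ones]
    refine sum_le_sum fun i hi => ?_
    exact card_pos.2 (π.nonempty_of_mem_parts (mem_of_mem_erase (mem_of_mem_erase hi)))
  have h3 : ((π.parts.erase A).erase B).card = π.parts.card - 2 := by
    rw [card_erase_of_mem hB', card_erase_of_mem hA]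
    omega
  have h4 : (univ : Finset V).card = Fintype.card V := card_univ
  omega

-- upper bound for C3
lemma ub3 : ∀ m, (∃ π : Finpartition (univ : Finset (Fin 3)),
    IsGCPartition (cycleGraph 3) π ∧ π.parts.card = m) → m ≤ 2 := by
  have key : ∀ T : Finset (Fin 3), IsGlobalDomSet (cycleGraph 3) T → T = univ := by decide
  rintro m ⟨π, hgc, rfl⟩
  by_contra hm
  push_neg at hm
  obtain ⟨A, hA⟩ := card_pos.1 (show 0 < π.parts.card by omega)
  obtain ⟨_, B, hB, hBA, hco⟩ := hgc A hA
  have hU : A ∪ B = univ := key _ hco.2.2.2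
  have hC : ∃ C ∈ π.parts, C ≠ A ∧ C ≠ B := by
    by_contra hC
    push_neg at hC
    have hsub : π.parts ⊆ {A, B} := by
      intro C hCm
      simp only [mem_insert, mem_singleton]
      rcases eq_or_ne C A with rfl | h1
      · exact Or.inl rfl
      · exact Or.inr (hC C hCm h1)
    have := card_le_card hsub
    have : ({A, B} : Finset (Finset (Fin 3))).card ≤ 2 := card_insert_le _ _ |>.trans (by simp)
    omega
  obtain ⟨C, hCm, hCA, hCB⟩ := hC
  obtain ⟨x, hx⟩ := π.nonempty_of_mem_parts hCm
  have hxU : x ∈ A ∪ B := hU ▸ mem_univ x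
  rcases mem_union.1 hxU with hxA | hxB
  · exact (π.supIndep.pairwiseDisjoint hCm hA hCA).forall_ne_finset hx hxA rfl
  · exact (π.supIndep.pairwiseDisjoint hCm hB hCB).forall_ne_finset hx hxB rfl

lemma ub5 : ∀ m, (∃ π : Finpartition (univ : Finset (Fin 5)),
    IsGCPartition (cycleGraph 5) π ∧ π.parts.card = m) → m ≤ 4 := by
  have key : ∀ T : Finset (Fin 5), T.card ≤ 2 → ¬ IsGlobalDomSet (cycleGraph 5) T := by decide
  rintro m ⟨π, hgc, rfl⟩
  by_contra hm
  push_neg at hm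
  have hle : π.parts.card ≤ 5 := by
    have := π.card_parts_le_card
    simpa using this
  have hc5 : π.parts.card = 5 := by omega
  obtain ⟨A, hA⟩ := card_pos.1 (show 0 < π.parts.card by omega)
  obtain ⟨_, B, hB, hBA, hco⟩ := hgc A hA
  have cA : A.card ≤ 1 := by have := part_card_le π hA; simp at this; omega
  have cB : B.card ≤ 1 := by have := part_card_le π hB; simp at this; omega
  have : (A ∪ B).card ≤ 2 := (card_union_le _ _).trans (by omega)
  exact key _ this hco.2.2.2

lemma ub7 : ∀ m, (∃ π : Finpartition (univ : Finset (Fin 7)),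
    IsGCPartition (cycleGraph 7) π ∧ π.parts.card = m) → m ≤ 5 := by
  have key : ∀ T : Finset (Fin 7), T.card ≤ 2 → ¬ IsGlobalDomSet (cycleGraph 7) T := by decide
  have key2 : ¬ ∃ P : Finset (Fin 7), P.card = 2 ∧
      ∀ v, v ∉ P → IsGlobalDomSet (cycleGraph 7) (insert v P) := by decide
  rintro m ⟨π, hgc, rfl⟩
  by_contra hm
  push_neg at hm
  have hle : π.parts.card ≤ 7 := by
    have := π.card_parts_le_card
    simpa using this
  rcases (show π.parts.card = 6 ∨ π.parts.card = 7 by omega) with hc | hc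
  · -- card 6 : one doubleton part P and five singletons
    have hall2 : ∀ A ∈ π.parts, A.card ≤ 2 := by
      intro A hA
      have := part_card_le π hA
      simp at this
      omega
    have hex2 : ∃ P ∈ π.parts, P.card = 2 := by
      by_contra hno
      push_neg at hno
      have hall1 : ∀ A ∈ π.parts, A.card ≤ 1 := by
        intro A hA
        have h1 := hall2 A hA
        have h2 := hno A hA
        omega
      have hsum := π.sum_card_parts
      have : ∑ i ∈ π.parts, i.card ≤ ∑ _i ∈ π.parts, 1 := sum_le_sum hall1
      simp at hsum this
      omega
    obtain ⟨P, hP, hPc⟩ := hex2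
    refine key2 ⟨P, hPc, ?_⟩
    intro v hv
    obtain ⟨Q, hQ, hvQ⟩ := π.exists_mem (mem_univ v)
    have hQP : Q ≠ P := fun h => hv (h ▸ hvQ)
    have hQ1 : Q.card = 1 := by
      have h1 := two_parts_card_le π hP hQ (fun h => hQP h.symm)
      have h2 : 0 < Q.card := card_pos.2 (π.nonempty_of_mem_parts hQ)
      simp at h1
      omega
    have hQv : Q = {v} := by
      obtain ⟨a, ha⟩ := card_eq_one.1 hQ1
      rw [ha] at hvQ ⊢
      rw [mem_singleton] at hvQ
      rw [hvQ]
    obtain ⟨_, R, hR, hRQ, hco⟩ := hgc Q hQ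
    have hRP : R = P := by
      by_contra hRP
      have hR1 : R.card = 1 := by
        have h1 := two_parts_card_le π hP hR (fun h => hRP h.symm)
        have h2 : 0 < R.card := card_pos.2 (π.nonempty_of_mem_parts hR)
        simp at h1
        omega
      have : (Q ∪ R).card ≤ 2 := (card_union_le _ _).trans (by omega)
      exact key _ this hco.2.2.2
    have := hco.2.2.2
    rw [hRP, hQv] at this
    have he : ({v} : Finset (Fin 7)) ∪ P = insert v P := by
      ext x; simp [or_comm]
    rwa [he] at this
  · -- card 7: all singletons
    obtain ⟨A, hA⟩ := card_pos.1 (show 0 < π.parts.card by omega)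
    obtain ⟨_, B, hB, hBA, hco⟩ := hgc A hA
    have cA : A.card ≤ 1 := by have := part_card_le π hA; simp at this; omega
    have cB : B.card ≤ 1 := by have := part_card_le π hB; simp at this; omega
    have : (A ∪ B).card ≤ 2 := (card_union_le _ _).trans (by omega)
    exact key _ this hco.2.2.2

theorem gc_cycleGraph :
    globalCoalitionNumber (cycleGraph 3) = 2 ∧
    globalCoalitionNumber (cycleGraph 4) = 4 ∧
    globalCoalitionNumber (cycleGraph 5) = 4 ∧
    globalCoalitionNumber (cycleGraph 6) = 6 ∧
    globalCoalitionNumber (cycleGraph 7) = 5 ∧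
    (∀ n : ℕ, 8 ≤ n → globalCoalitionNumber (cycleGraph n) = 6) := by
  refine ⟨?_, ?_, ?_, ?_, ?_, ?_⟩
  · exact GC_eq ⟨P3, by decide, by decide⟩ ub3
  · refine GC_eq ⟨P4, by decide, by decide⟩ ?_
    rintro m ⟨π, _, rfl⟩
    have := π.card_parts_le_card
    simpa using this
  · exact GC_eq ⟨P5, by decide, by decide⟩ ub5
  · refine GC_eq ⟨P6, by decide, by decide⟩ ?_
    rintro m ⟨π, _, rfl⟩
    have := π.card_parts_le_card
    simpa using this
  · exact GC_eq ⟨P7, by decide, by decide⟩ ub7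
  · intro n hn
    haveI : NeZero n := ⟨by omega⟩
    refine GC_eq (exists_gc6 hn) ?_
    rintro m ⟨π, hgc, rfl⟩
    exact UB_main hn hgc
end

section
/- If G is a finite simple graph with no full vertices (no vertex adjacent to all other vertices), then GC(G) ≥ PRC(G). -/
/-!
A perfect coalition `A ∪ B` is already a global coalition. It dominates `G` since it is perfect
dominating. It also dominates `Gᶜ`: an outside vertex `v` has exactly one neighbour in `A ∪ B`,
so of two chosen vertices `a ∈ A`, `b ∈ B` at least one is a non-neighbour of `v`. Neither `A` nor
`B` dominates `G`, so neither is globally dominating. Without full vertices there are no singleton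
dominating sets, so every prc-partition is a gc-partition, and `PRC(G) ≤ GC(G)`.
-/

open SimpleGraph Finset

variable {V : Type*} [Fintype V] [DecidableEq V]

/-- `S` is a perfect dominating set of `G`: every vertex not in `S` has exactly one neighbor
in `S`. -/
def IsPerfectDomSet (G : SimpleGraph V) (S : Finset V) : Prop :=
  ∀ v ∉ S, ∃! u, u ∈ S ∧ G.Adj u v

/-- Disjoint sets `A` and `B` form a perfect coalition in `G`. -/
def IsPerfectCoalition (G : SimpleGraph V) (A B : Finset V) : Prop :=
  Disjoint A B ∧ ¬ IsDomSet G A ∧ ¬ IsDomSet G B ∧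
  (∀ v ∉ A, ∀ u₁ ∈ A, ∀ u₂ ∈ A, G.Adj u₁ v → G.Adj u₂ v → u₁ = u₂) ∧
  (∀ v ∉ B, ∀ u₁ ∈ B, ∀ u₂ ∈ B, G.Adj u₁ v → G.Adj u₂ v → u₁ = u₂) ∧
  IsPerfectDomSet G (A ∪ B)

/-- `π` is a perfect coalition partition (prc-partition) of `G`. -/
def IsPrcPartition (G : SimpleGraph V) (π : Finpartition (Finset.univ : Finset V)) : Prop :=
  ∀ A ∈ π.parts, (∃ v : V, A = {v} ∧ IsDomSet G A) ∨
    ∃ B ∈ π.parts, B ≠ A ∧ IsPerfectCoalition G A B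

/-- The perfect coalition number `PRC(G)`. -/
noncomputable def perfectCoalitionNumber (G : SimpleGraph V) : ℕ :=
  sSup {n | ∃ π : Finpartition (Finset.univ : Finset V), IsPrcPartition G π ∧ π.parts.card = n}

variable {G : SimpleGraph V}

section

omit [Fintype V] [DecidableEq V]

lemma not_isDomSet_singleton (hfull : ∀ v : V, ∃ u : V, u ≠ v ∧ ¬ G.Adj v u) (v : V) :
    ¬ IsDomSet G {v} := by
  intro hdom
  obtain ⟨u, huv, hvu⟩ := hfull v
  rcases hdom u with hu | ⟨w, hw, hwu⟩
  · exact huv (mem_singleton.mp hu)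
  · exact hvu (mem_singleton.mp hw ▸ hwu)

namespace IsPerfectDomSet

variable {S : Finset V}

lemma isDomSet (h : IsPerfectDomSet G S) : IsDomSet G S := fun v ↦
  (em (v ∈ S)).imp_right fun hv ↦ (h v hv).exists

lemma isDomSet_compl (h : IsPerfectDomSet G S) {a b : V} (ha : a ∈ S) (hb : b ∈ S)
    (hab : a ≠ b) : IsDomSet Gᶜ S := by
  intro v
  by_cases hv : v ∈ S
  · exact Or.inl hv
  have hne : ∀ u ∈ S, u ≠ v := fun u hu huv ↦ hv (huv ▸ hu)
  by_cases hav : G.Adj a v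
  · have hbv : ¬ G.Adj b v := fun hbv ↦ hab ((h v hv).unique ⟨ha, hav⟩ ⟨hb, hbv⟩)
    exact Or.inr ⟨b, hb, (compl_adj G b v).mpr ⟨hne b hb, hbv⟩⟩
  · exact Or.inr ⟨a, ha, (compl_adj G a v).mpr ⟨hne a ha, hav⟩⟩

lemma isGlobalDomSet (h : IsPerfectDomSet G S) {a b : V} (ha : a ∈ S) (hb : b ∈ S)
    (hab : a ≠ b) : IsGlobalDomSet G S :=
  ⟨h.isDomSet, h.isDomSet_compl ha hb hab⟩

end IsPerfectDomSet

end

omit [Fintype V] in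
lemma IsPerfectCoalition.isGlobalCoalition {A B : Finset V} (h : IsPerfectCoalition G A B)
    (hA : A.Nonempty) (hB : B.Nonempty) : IsGlobalCoalition G A B := by
  obtain ⟨hdisj, hnA, hnB, -, -, hperf⟩ := h
  obtain ⟨a, ha⟩ := hA
  obtain ⟨b, hb⟩ := hB
  have hab : a ≠ b := fun hab ↦ disjoint_left.mp hdisj ha (hab ▸ hb)
  exact ⟨hdisj, fun hg ↦ hnA hg.1, fun hg ↦ hnB hg.1,
    hperf.isGlobalDomSet (mem_union_left B ha) (mem_union_right A hb) hab⟩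

lemma IsPrcPartition.isGCPartition (hfull : ∀ v : V, ∃ u : V, u ≠ v ∧ ¬ G.Adj v u)
    {π : Finpartition (univ : Finset V)} (hπ : IsPrcPartition G π) : IsGCPartition G π := by
  intro A hA
  rcases hπ A hA with ⟨v, rfl, hdom⟩ | ⟨B, hB, hBA, hAB⟩
  · exact absurd hdom (not_isDomSet_singleton hfull v)
  · have hglob := hAB.isGlobalCoalition (π.nonempty_of_mem_parts hA) (π.nonempty_of_mem_parts hB)
    exact ⟨hglob.2.1, B, hB, hBA, hglob⟩

lemma sSup_card_parts_mono {P Q : Finpartition (univ : Finset V) → Prop} (hPQ : ∀ π, P π → Q π) :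
    sSup {n | ∃ π, P π ∧ #π.parts = n} ≤ sSup {n | ∃ π, Q π ∧ #π.parts = n} := by
  rcases Set.eq_empty_or_nonempty {n | ∃ π, P π ∧ #π.parts = n} with hP | hP
  · simp [hP]
  refine csSup_le_csSup ⟨Fintype.card V, ?_⟩ hP ?_
  · rintro n ⟨π, -, rfl⟩
    simpa using π.card_parts_le_card
  · rintro n ⟨π, hπ, rfl⟩
    exact ⟨π, hPQ π hπ, rfl⟩

theorem gc_ge_prc (G : SimpleGraph V) (hfull : ∀ v : V, ∃ u : V, u ≠ v ∧ ¬ G.Adj v u) :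
    perfectCoalitionNumber G ≤ globalCoalitionNumber G :=
  sSup_card_parts_mono fun _ hπ ↦ hπ.isGCPartition hfull
end

section
/- Let T be a finite tree of order n > 1. Then GC(T) = n if and only if T is a star or T = P₄. -/
open SimpleGraph Finset

variable {V : Type*} [Fintype V] [DecidableEq V]

set_option linter.unusedSectionVars false
set_option linter.unusedVariables false
set_option maxHeartbeats 1000000

variable {G : SimpleGraph V}

lemma not_global_singleton (v : V) (w : V) (hw : G.Adj v w) :
    ¬ IsGlobalDomSet G {v} := by
  rintro ⟨-, h2⟩
  rcases h2 w with h | ⟨u, hu, hadj⟩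
  · simp at h; exact hw.ne h.symm
  · simp at hu; subst hu
    exact hadj.2 hw

lemma bddAboveGC :
    BddAbove {n | ∃ π : Finpartition (Finset.univ : Finset V), IsGCPartition G π ∧ π.parts.card = n} := by
  refine ⟨Fintype.card V, ?_⟩
  rintro n ⟨π, -, rfl⟩
  simpa using π.card_parts_le_card

lemma L1 (hnb : ∀ v : V, ∃ w, G.Adj v w)
    (hpair : ∀ v : V, ∃ u, u ≠ v ∧ IsGlobalDomSet G {u, v}) :
    globalCoalitionNumber G = Fintype.card V := by
  have hmem : Fintype.card V ∈
      {n | ∃ π : Finpartition (Finset.univ : Finset V), IsGCPartition G π ∧ π.parts.card = n} := by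
    refine ⟨⊥, ?_, by simpa using Finpartition.card_bot (univ : Finset V)⟩
    intro A hA
    rw [Finpartition.mem_bot_iff] at hA
    obtain ⟨a, -, rfl⟩ := hA
    obtain ⟨w, hw⟩ := hnb a
    obtain ⟨u, hua, hglob⟩ := hpair a
    obtain ⟨w', hw'⟩ := hnb u
    refine ⟨not_global_singleton a w hw, {u}, ?_, ?_, ?_⟩
    · rw [Finpartition.mem_bot_iff]; exact ⟨u, mem_univ u, rfl⟩
    · simpa using hua
    · refine ⟨by simpa using hua.symm, not_global_singleton a w hw,
        not_global_singleton u w' hw', ?_⟩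
      have : ({a} : Finset V) ∪ {u} = {u, a} := by
        ext x; simp [or_comm]
      rw [this]
      exact hglob
  apply le_antisymm
  · exact csSup_le ⟨_, hmem⟩ (by rintro n ⟨π, -, rfl⟩; simpa using π.card_parts_le_card)
  · exact le_csSup bddAboveGC hmem

lemma L2 (hn : 1 < Fintype.card V) (h : globalCoalitionNumber G = Fintype.card V) :
    ∀ v : V, ∃ u, u ≠ v ∧ IsGlobalDomSet G {u, v} := by
  have hne : {n | ∃ π : Finpartition (Finset.univ : Finset V),
      IsGCPartition G π ∧ π.parts.card = n}.Nonempty := by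
    by_contra hcon
    rw [Set.not_nonempty_iff_eq_empty] at hcon
    rw [globalCoalitionNumber, hcon] at h
    simp at h
    omega
  have hmem := Nat.sSup_mem hne bddAboveGC
  rw [globalCoalitionNumber] at h
  rw [h] at hmem
  obtain ⟨π, hgc, hcard⟩ := hmem
  -- every part is a singleton
  have hsing : ∀ A ∈ π.parts, A.card = 1 := by
    by_contra hcon
    push_neg at hcon
    obtain ⟨A, hA, hA1⟩ := hcon
    have h1 : ∀ B ∈ π.parts, 1 ≤ B.card := by
      intro B hB
      have := π.ne_bot hB
      exact Finset.card_pos.2 (Finset.nonempty_iff_ne_empty.2 (by simpa using this))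
    have h2 : 2 ≤ A.card := by
      have := h1 A hA; omega
    have hsum := π.sum_card_parts
    have : π.parts.card + 1 ≤ ∑ B ∈ π.parts, B.card := by
      calc π.parts.card + 1 = (∑ _B ∈ π.parts, 1) + 1 := by simp
      _ ≤ ∑ B ∈ π.parts, B.card := by
          rw [← Finset.sum_erase_add _ _ hA, ← Finset.sum_erase_add _ (fun B => B.card) hA]
          have h3 : (∑ _B ∈ π.parts.erase A, 1) ≤ ∑ B ∈ π.parts.erase A, B.card :=
            Finset.sum_le_sum (fun B hB => h1 B (Finset.mem_of_mem_erase hB))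
          omega
    rw [hsum] at this
    rw [Finset.card_univ, hcard] at this
    omega
  intro v
  obtain ⟨A, hA, hvA⟩ := π.exists_mem (Finset.mem_univ v)
  have hAv : A = {v} := by
    obtain ⟨a, ha⟩ := Finset.card_eq_one.1 (hsing A hA)
    subst ha; simp at hvA; rw [hvA]
  subst hAv
  obtain ⟨-, B, hB, hBA, hco⟩ := hgc {v} hA
  obtain ⟨u, hu⟩ := Finset.card_eq_one.1 (hsing B hB)
  subst hu
  refine ⟨u, fun huv => hBA (by rw [huv]), ?_⟩
  have hglob := hco.2.2.2
  have he : ({v} : Finset V) ∪ {u} = {u, v} := by ext x; simp [or_comm]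
  rw [he] at hglob
  exact hglob

lemma supports_eq (ha : G.IsAcyclic) {u v : V} {p q : G.Walk u v}
    (hp : p.IsPath) (hq : q.IsPath) : p.support = q.support := by
  have h := ha.path_unique ⟨p, hp⟩ ⟨q, hq⟩
  exact congrArg (fun r : G.Path u v => r.1.support) h

lemma tri (ha : G.IsAcyclic) {a b c : V} (hab : G.Adj a b) (hbc : G.Adj b c)
    (hac : G.Adj a c) : False := by
  have h1 : (Walk.cons hab (Walk.cons hbc Walk.nil)).IsPath := by
    simp [Walk.isPath_def, hab.ne, hbc.ne]; exact hac.ne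
  have h2 : (Walk.cons hac Walk.nil).IsPath := by
    simp [Walk.isPath_def]; exact hac.ne
  have := supports_eq ha h1 h2
  simp at this

lemma c4 (ha : G.IsAcyclic) {a b c d : V} (hab : G.Adj a b) (hbc : G.Adj b c)
    (hcd : G.Adj c d) (hda : G.Adj d a) (hac : a ≠ c) (hbd : b ≠ d) : False := by
  have h1 : (Walk.cons hab (Walk.cons hbc Walk.nil)).IsPath := by
    simp [Walk.isPath_def, hab.ne, hbc.ne]; exact hac
  have h2 : (Walk.cons hda.symm (Walk.cons hcd.symm Walk.nil)).IsPath := by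
    simp [Walk.isPath_def, hda.symm.ne, hcd.ne']; exact hac
  have := supports_eq ha h1 h2
  simp at this
  exact hbd this

lemma c5 (ha : G.IsAcyclic) {a b c d e : V} (hab : G.Adj a b) (hbc : G.Adj b c)
    (hcd : G.Adj c d) (hde : G.Adj d e) (hea : G.Adj e a)
    (hac : a ≠ c) (had : a ≠ d) (hbd : b ≠ d) (hbe : b ≠ e) (hce : c ≠ e) : False := by
  have h1 : (Walk.cons hab (Walk.cons hbc Walk.nil)).IsPath := by
    simp [Walk.isPath_def, hab.ne, hbc.ne]; exact hac
  have h2 : (Walk.cons hea.symm (Walk.cons hde.symm (Walk.cons hcd.symm Walk.nil))).IsPath := by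
    simp [Walk.isPath_def, hea.ne', hde.ne', hcd.ne']
    exact ⟨⟨had, hac⟩, hce.symm⟩
  have := supports_eq ha h1 h2
  simp at this

lemma p3_unique (ha : G.IsAcyclic) {u v a b c d : V}
    (h1 : G.Adj u a) (h2 : G.Adj a b) (h3 : G.Adj b v)
    (h4 : G.Adj u c) (h5 : G.Adj c d) (h6 : G.Adj d v)
    (hua : u ≠ b) (huv : u ≠ v) (hav : a ≠ v)
    (hub : u ≠ d) (hcv : c ≠ v) : a = c ∧ b = d := by
  have hp1 : (Walk.cons h1 (Walk.cons h2 (Walk.cons h3 Walk.nil))).IsPath := by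
    simp [Walk.isPath_def, h1.ne, h2.ne, h3.ne]
    exact ⟨⟨hua, huv⟩, hav⟩
  have hp2 : (Walk.cons h4 (Walk.cons h5 (Walk.cons h6 Walk.nil))).IsPath := by
    simp [Walk.isPath_def, h4.ne, h5.ne, h6.ne]
    exact ⟨⟨hub, huv⟩, hcv⟩
  have := supports_eq ha hp1 hp2
  simp at this
  exact this

def Dom (G : SimpleGraph V) (u v : V) : Prop :=
  ∀ w, w = u ∨ w = v ∨ G.Adj u w ∨ G.Adj v w

lemma Dom.symm {u v : V} (h : Dom G u v) : Dom G v u := by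
  intro w; rcases h w with h | h | h | h <;> tauto

structure P4Struct (G : SimpleGraph V) (a b c d : V) : Prop where
  hab : G.Adj a b
  hbc : G.Adj b c
  hcd : G.Adj c d
  nac : ¬ G.Adj a c
  nad : ¬ G.Adj a d
  nbd : ¬ G.Adj b d
  dac : a ≠ c
  dad : a ≠ d
  dbd : b ≠ d
  cover : ∀ w, w = a ∨ w = b ∨ w = c ∨ w = d

lemma exists_neighbor (hc : G.Connected) (hn : 1 < Fintype.card V) (v : V) :
    ∃ w, G.Adj v w := by
  obtain ⟨w, hw⟩ := Fintype.exists_ne_of_one_lt_card hn v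
  obtain ⟨p⟩ := hc.preconnected v w
  cases p with
  | nil => exact absurd rfl hw.symm
  | cons h q => exact ⟨_, h⟩

lemma crossing {P : V → Prop} {x y : V} (p : G.Walk x y) :
    P x → ¬ P y → ∃ a b, P a ∧ ¬ P b ∧ G.Adj a b := by
  induction p with
  | nil => intro hx hy; exact absurd hx hy
  | @cons u z w h q ih =>
    intro hx hy
    by_cases hz : P z
    · exact ih hz hy
    · exact ⟨u, z, hx, hz, h⟩

lemma leaf_nbr (ha : G.IsAcyclic) {u v w : V} (huv : G.Adj u v) (hD : Dom G u v)
    (hwv : w ≠ v) (huw : G.Adj u w) : ∀ z, G.Adj w z → z = u := by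
  intro z hz
  by_cases h1 : z = u
  · exact h1
  exfalso
  by_cases h2 : z = v
  · subst h2; exact tri ha huw hz huv
  rcases hD z with h | h | h | h
  · exact h1 h
  · exact h2 h
  · exact tri ha huw hz h
  · exact c4 ha huw hz h.symm huv.symm (Ne.symm h1) hwv

lemma get_leaf {u v : V} (huv : G.Adj u v) (hD : Dom G u v)
    (hns : ∀ c, ∃ w, w ≠ c ∧ ¬ G.Adj c w) :
    ∃ a, G.Adj u a ∧ a ≠ v ∧ ¬ G.Adj v a := by
  obtain ⟨x, hx1, hx2⟩ := hns v
  rcases hD x with h | h | h | h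
  · subst h; exact absurd huv.symm hx2
  · exact absurd h hx1
  · exact ⟨x, h, hx1, hx2⟩
  · exact absurd h hx2

lemma caseA_uniq (ha : G.IsAcyclic) {u v a d : V} (huv : G.Adj u v)
    (hD : Dom G u v) (hD' : Dom G v u)
    (hp : ∀ x : V, ∃ p, p ≠ x ∧ Dom G p x)
    (hua : G.Adj u a) (hav : a ≠ v) (hnva : ¬ G.Adj v a)
    (hvd : G.Adj v d) (hdu : d ≠ u) (hnud : ¬ G.Adj u d) :
    ∀ a', G.Adj u a' → a' ≠ v → a' = a := by
  intro a' h1 h2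
  by_contra h3
  obtain ⟨p, hpa, hDp⟩ := hp a
  have hpd : p = d ∨ p = v := by
    rcases hDp d with h | h | h | h
    · exact Or.inl h.symm
    · exact absurd (h ▸ hua) hnud
    · exact Or.inr (leaf_nbr ha huv.symm hD' hdu hvd p h.symm)
    · exact absurd (leaf_nbr ha huv hD hav hua d h) hdu
  have hpa' : p = a' ∨ p = u := by
    rcases hDp a' with h | h | h | h
    · exact Or.inl h.symm
    · exact absurd h h3
    · exact Or.inr (leaf_nbr ha huv hD h2 h1 p h.symm)
    · exact absurd (leaf_nbr ha huv hD hav hua a' h) h1.ne'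
  rcases hpd with rfl | rfl <;> rcases hpa' with h | h
  · exact hnud (h ▸ h1)
  · exact hdu h
  · exact h2 h.symm
  · exact huv.ne' h

lemma caseA (ha : G.IsAcyclic) {u v : V} (huv : G.Adj u v) (hD : Dom G u v)
    (hp : ∀ x : V, ∃ p, p ≠ x ∧ Dom G p x)
    (hns : ∀ c, ∃ w, w ≠ c ∧ ¬ G.Adj c w) :
    ∃ a d, P4Struct G a u v d := by
  have hD' := hD.symm
  obtain ⟨a, hua, hav, hnva⟩ := get_leaf huv hD hns
  obtain ⟨d, hvd, hdu, hnud⟩ := get_leaf huv.symm hD' hns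
  have uu := caseA_uniq ha huv hD hD' hp hua hav hnva hvd hdu hnud
  have uv := caseA_uniq ha huv.symm hD' hD hp hvd hdu hnud hua hav hnva
  refine ⟨a, d, ⟨hua.symm, huv, hvd, fun h => hnva h.symm,
    fun h => hdu (leaf_nbr ha huv hD hav hua d h), hnud, hav,
    fun h => hnud (h ▸ hua), Ne.symm hdu, ?_⟩⟩
  intro w
  rcases hD w with h | h | h | h
  · exact Or.inr (Or.inl h)
  · exact Or.inr (Or.inr (Or.inl h))
  · by_cases hw : w = v
    · exact Or.inr (Or.inr (Or.inl hw))
    · exact Or.inl (uu w h hw)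
  · by_cases hw : w = u
    · exact Or.inr (Or.inl hw)
    · exact Or.inr (Or.inr (Or.inr (uv w h hw)))
lemma caseB1core (ha : G.IsAcyclic) {u v w : V} (hune : u ≠ v) (huv : ¬ G.Adj u v)
    (hD : Dom G u v)
    (huw : G.Adj u w) (hwv : G.Adj w v)
    (hvleaf : ∀ d, G.Adj v d → d = w)
    (hp : ∀ x : V, ∃ p, p ≠ x ∧ Dom G p x)
    (hns : ∀ c, ∃ x, x ≠ c ∧ ¬ G.Adj c x) :
    ∃ a, P4Struct G a u w v := by
  have nbrw : ∀ z, G.Adj w z → z = u ∨ z = v := by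
    intro z hz
    rcases hD z with h | h | h | h
    · exact Or.inl h
    · exact Or.inr h
    · exact absurd (tri ha huw hz h) not_false
    · exact absurd (tri ha hwv.symm hz h) not_false
  have uleaf : ∀ a, G.Adj u a → a ≠ w →
      (¬ G.Adj v a ∧ a ≠ v ∧ ∀ z, G.Adj a z → z = u) := by
    intro a hua haw
    have hav : a ≠ v := fun h => huv (h ▸ hua)
    have hnva : ¬ G.Adj v a := by
      intro h
      exact c4 ha hua h.symm hwv.symm huw.symm hune haw
    refine ⟨hnva, hav, ?_⟩
    intro z hz
    by_cases h1 : z = u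
    · exact h1
    exfalso
    by_cases h2 : z = v
    · exact hnva (h2 ▸ hz).symm
    by_cases h3 : z = w
    · subst h3
      rcases nbrw a hz.symm with h | h
      · exact hua.ne' h
      · exact hav h
    rcases hD z with h | h | h | h
    · exact h1 h
    · exact h2 h
    · exact tri ha hua hz h
    · exact c5 ha hua hz h.symm hwv.symm huw.symm (Ne.symm h1) hune hav haw h3
  -- existence of a leaf of u other than w
  obtain ⟨x, hxw, hnwx⟩ := hns w
  have hex : ∃ a, G.Adj u a ∧ a ≠ w := by
    rcases hD x with h | h | h | h
    · exact absurd (h ▸ huw.symm : G.Adj w x) hnwx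
    · exact absurd (h ▸ hwv : G.Adj w x) hnwx
    · exact ⟨x, h, hxw⟩
    · exact absurd (hvleaf x h) hxw
  obtain ⟨a, hua, haw⟩ := hex
  obtain ⟨hnva, hav, aleaf⟩ := uleaf a hua haw
  have uniq : ∀ a', G.Adj u a' → a' ≠ w → a' = a := by
    intro a' h1 h2
    by_contra h3
    obtain ⟨hnva', hav', aleaf'⟩ := uleaf a' h1 h2
    obtain ⟨p, hpa, hDp⟩ := hp a
    have hpv : p = v ∨ p = w := by
      rcases hDp v with h | h | h | h
      · exact Or.inl h.symm
      · exact absurd h.symm hav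
      · exact Or.inr (hvleaf p h.symm)
      · exact absurd h.symm hnva
    have hpa' : p = a' ∨ p = u := by
      rcases hDp a' with h | h | h | h
      · exact Or.inl h.symm
      · exact absurd h h3
      · exact Or.inr (aleaf' p h.symm)
      · exact absurd (aleaf a' h) h1.ne'
    rcases hpv with rfl | rfl <;> rcases hpa' with h | h
    · exact hav' h.symm
    · exact hune h.symm
    · exact h2 h.symm
    · exact huw.ne' h
  refine ⟨a, ⟨hua.symm, huw, hwv, ?_, fun h => hnva h.symm, huv, haw, hav, hune, ?_⟩⟩
  · intro h
    rcases nbrw a h.symm with h' | h'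
    · exact hua.ne' h'
    · exact hav h'
  intro z
  rcases hD z with h | h | h | h
  · exact Or.inr (Or.inl h)
  · exact Or.inr (Or.inr (Or.inr h))
  · by_cases hz : z = w
    · exact Or.inr (Or.inr (Or.inl hz))
    · exact Or.inl (uniq z h hz)
  · exact Or.inr (Or.inr (Or.inl (hvleaf z h)))

lemma caseB2core (ha : G.IsAcyclic) {u v w x : V} (hune : u ≠ v) (huv : ¬ G.Adj u v)
    (hD : Dom G u v) (hnc : ∀ y, G.Adj u y → ¬ G.Adj y v)
    (huw : G.Adj u w) (hwx : G.Adj w x) (hxv : G.Adj x v)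
    (huleaf : ∀ a, G.Adj u a → a = w)
    (hp : ∀ y : V, ∃ p, p ≠ y ∧ Dom G p y) :
    P4Struct G u w x v := by
  have hnux : ¬ G.Adj u x := fun h => hnc x h hxv
  have hnwv : ¬ G.Adj w v := fun h => hnc w huw h
  have hux : u ≠ x := fun h => huv (h ▸ hxv)
  have hwv : w ≠ v := fun h => huv (h ▸ huw)
  have nbrx : ∀ z, G.Adj x z → z = w ∨ z = v := by
    intro z hz
    rcases hD z with h | h | h | h
    · subst h; exact absurd hz.symm hnux
    · exact Or.inr h
    · exact Or.inl (huleaf z h)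
    · exact absurd (tri ha hz h.symm hxv) not_false
  have nbrw : ∀ z, G.Adj w z → z = u ∨ z = x := by
    intro z hz
    rcases hD z with h | h | h | h
    · exact Or.inl h
    · subst h; exact absurd hz hnwv
    · exact absurd (huleaf z h) hz.ne'
    · by_cases hzx : z = x
      · exact Or.inr hzx
      · exact absurd (c4 ha hz h.symm hxv.symm hwx.symm hwv hzx) not_false
  have vleaf : ∀ d, G.Adj v d → d ≠ x →
      (¬ G.Adj u d ∧ d ≠ u ∧ ∀ z, G.Adj d z → z = v) := by
    intro d hvd hdx
    have hdu : d ≠ u := fun h => huv (h ▸ hvd).symm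
    have hnud : ¬ G.Adj u d := by
      intro h
      exact hnc d h hvd.symm
    refine ⟨hnud, hdu, ?_⟩
    intro z hz
    by_cases h1 : z = v
    · exact h1
    exfalso
    rcases hD z with h | h | h | h
    · subst h; exact hnud hz.symm
    · exact h1 h
    · have := huleaf z h
      subst this
      rcases nbrw d hz.symm with h' | h'
      · exact hdu h'
      · exact hdx h'
    · exact tri ha hvd hz h
  have hvleaf2 : ∀ d, G.Adj v d → d = x := by
    intro d hvd
    by_contra hdx
    obtain ⟨hnud, hdu, dleaf⟩ := vleaf d hvd hdx
    obtain ⟨p, hpx, hDp⟩ := hp x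
    have hpu : p = u ∨ p = w := by
      rcases hDp u with h | h | h | h
      · exact Or.inl h.symm
      · exact absurd h hux
      · exact Or.inr (huleaf p h.symm)
      · exact absurd h.symm hnux
    have hpd : p = d ∨ p = v := by
      rcases hDp d with h | h | h | h
      · exact Or.inl h.symm
      · exact absurd h hdx
      · exact Or.inr (dleaf p h.symm)
      · rcases nbrx d h with h' | h'
        · subst h'; exact absurd hvd.symm hnwv
        · exact absurd h' hvd.ne'
    rcases hpu with rfl | rfl <;> rcases hpd with h | h
    · exact hdu h.symm
    · exact hune h
    · exact absurd hvd.symm (h ▸ hnwv)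
    · exact hwv h
  refine ⟨huw, hwx, hxv, hnux, huv, hnwv, hux, hune, hwv, ?_⟩
  intro z
  rcases hD z with h | h | h | h
  · exact Or.inl h
  · exact Or.inr (Or.inr (Or.inr h))
  · exact Or.inr (Or.inl (huleaf z h))
  · exact Or.inr (Or.inr (Or.inl (hvleaf2 z h)))
lemma structure_main (ha : G.IsAcyclic) (hc : G.Connected) (hn : 1 < Fintype.card V)
    (hp : ∀ x : V, ∃ p, p ≠ x ∧ Dom G p x) :
    (∃ c : V, ∀ w, w ≠ c → G.Adj c w) ∨ ∃ a b c d, P4Struct G a b c d := by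
  classical
  by_cases hstar : ∃ c : V, ∀ w, w ≠ c → G.Adj c w
  · exact Or.inl hstar
  right
  push_neg at hstar
  have hns : ∀ c : V, ∃ w, w ≠ c ∧ ¬ G.Adj c w := hstar
  have : Nonempty V := Fintype.card_pos_iff.mp (by omega)
  obtain ⟨v0⟩ := this
  obtain ⟨u0, hu0, hD⟩ := hp v0
  by_cases hadj : G.Adj u0 v0
  · obtain ⟨a, d, hP⟩ := caseA ha hadj hD hp hns
    exact ⟨a, u0, v0, d, hP⟩
  -- non-adjacent case
  have hD' : Dom G v0 u0 := hD.symm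
  obtain ⟨p⟩ := hc.preconnected u0 v0
  obtain ⟨aa, bb, hPa, hPb, hab⟩ := crossing (P := fun z => z = u0 ∨ G.Adj u0 z) p
    (Or.inl rfl) (by rintro (h | h); exact hu0 h.symm; exact hadj h)
  have haa : G.Adj u0 aa := by
    rcases hPa with rfl | h
    · exact absurd (Or.inr hab) hPb
    · exact h
  have hnub : ¬ G.Adj u0 bb := fun h => hPb (Or.inr h)
  have hbu : bb ≠ u0 := fun h => hPb (Or.inl h)
  by_cases hcn : ∃ y, G.Adj u0 y ∧ G.Adj y v0
  · -- common neighbor w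
    obtain ⟨w, hw1, hw2⟩ := hcn
    -- general facts
    have nbrw : ∀ z, G.Adj w z → z = u0 ∨ z = v0 := by
      intro z hz
      rcases hD z with h | h | h | h
      · exact Or.inl h
      · exact Or.inr h
      · exact absurd (tri ha hw1 hz h) not_false
      · exact absurd (tri ha hw2.symm hz h) not_false
    have uleaf : ∀ a, G.Adj u0 a → a ≠ w → (¬ G.Adj v0 a ∧ a ≠ v0 ∧ ∀ z, G.Adj a z → z = u0) := by
      intro a hua haw
      have hav : a ≠ v0 := fun h => hadj (h ▸ hua)
      have hnva : ¬ G.Adj v0 a := fun h => c4 ha hua h.symm hw2.symm hw1.symm hu0 haw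
      refine ⟨hnva, hav, ?_⟩
      intro z hz
      by_cases h1 : z = u0
      · exact h1
      exfalso
      by_cases h2 : z = v0
      · exact hnva (h2 ▸ hz).symm
      by_cases h3 : z = w
      · subst h3
        rcases nbrw a hz.symm with h' | h'
        · exact hua.ne' h'
        · exact hav h'
      rcases hD z with h | h | h | h
      · exact h1 h
      · exact h2 h
      · exact tri ha hua hz h
      · exact c5 ha hua hz h.symm hw2.symm hw1.symm (Ne.symm h1) hu0 hav haw h3
    have vleaf : ∀ d, G.Adj v0 d → d ≠ w → (¬ G.Adj u0 d ∧ d ≠ u0 ∧ ∀ z, G.Adj d z → z = v0) := by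
      intro d hvd hdw
      have hdu : d ≠ u0 := fun h => hadj (h ▸ hvd).symm
      have hnud : ¬ G.Adj u0 d := fun h => c4 ha h hvd.symm hw2.symm hw1.symm hu0 hdw
      refine ⟨hnud, hdu, ?_⟩
      intro z hz
      by_cases h1 : z = v0
      · exact h1
      exfalso
      by_cases h2 : z = u0
      · exact hnud (h2 ▸ hz).symm
      by_cases h3 : z = w
      · subst h3
        rcases nbrw d hz.symm with h' | h'
        · exact hdu h'
        · exact hvd.ne' h'
      rcases hD z with h | h | h | h
      · exact h2 h
      · exact h1 h
      · exact c5 ha hvd hz h.symm hw1 hw2 (Ne.symm h1) (Ne.symm hu0) hdu hdw h3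
      · exact tri ha hvd hz h
    have hkey : (∀ d, G.Adj v0 d → d = w) ∨ (∀ a, G.Adj u0 a → a = w) := by
      by_contra hcon
      push_neg at hcon
      obtain ⟨⟨d, hvd, hdw⟩, ⟨a, hua, haw⟩⟩ := hcon
      obtain ⟨hnva, hav, aleaf⟩ := uleaf a hua haw
      obtain ⟨hnud, hdu, dleaf⟩ := vleaf d hvd hdw
      obtain ⟨q, hqw, hDq⟩ := hp w
      have hqa : q = a ∨ q = u0 := by
        rcases hDq a with h | h | h | h
        · exact Or.inl h.symm
        · exact absurd h haw
        · exact Or.inr (aleaf q h.symm)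
        · rcases nbrw a h with h' | h'
          · exact absurd h' hua.ne'
          · exact absurd h' hav
      have hqd : q = d ∨ q = v0 := by
        rcases hDq d with h | h | h | h
        · exact Or.inl h.symm
        · exact absurd h hdw
        · exact Or.inr (dleaf q h.symm)
        · rcases nbrw d h with h' | h'
          · exact absurd h' hdu
          · exact absurd h' hvd.ne'
      rcases hqa with rfl | rfl <;> rcases hqd with h | h
      · exact hnud (h ▸ hua)
      · exact hav h
      · exact hdu h.symm
      · exact hu0 h
    rcases hkey with hvl | hul
    · obtain ⟨a, hP⟩ := caseB1core ha hu0 hadj hD hw1 hw2 hvl hp hns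
      exact ⟨a, u0, w, v0, hP⟩
    · obtain ⟨a, hP⟩ := caseB1core ha (Ne.symm hu0) (fun h => hadj h.symm) hD'
        hw2.symm hw1.symm hul hp hns
      exact ⟨a, v0, w, u0, hP⟩
  · -- no common neighbor
    push_neg at hcn
    have hnc : ∀ y, G.Adj u0 y → ¬ G.Adj y v0 := hcn
    have hvb : G.Adj v0 bb := by
      rcases hD bb with h | h | h | h
      · exact absurd h hbu
      · exact absurd (h ▸ hab : G.Adj aa v0) (hnc aa haa)
      · exact absurd h hnub
      · exact h
    have hnav : ¬ G.Adj aa v0 := hnc aa haa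
    have hav0 : aa ≠ v0 := fun h => hadj (h ▸ haa)
    have hbv0 : bb ≠ v0 := hvb.ne'
    -- path u0 - aa - bb - v0
    have nbraa : ∀ z, G.Adj aa z → z = u0 ∨ z = bb := by
      intro z hz
      rcases hD z with h | h | h | h
      · exact Or.inl h
      · subst h; exact absurd hz hnav
      · exact absurd (tri ha h hz.symm haa) not_false
      · by_cases hzb : z = bb
        · exact Or.inr hzb
        · exact absurd (c4 ha hz h.symm hvb hab.symm hav0 hzb) not_false
    have nbrbb : ∀ z, G.Adj bb z → z = aa ∨ z = v0 := by
      intro z hz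
      rcases hD z with h | h | h | h
      · subst h; exact absurd hz.symm hnub
      · exact Or.inr h
      · by_cases hza : z = aa
        · exact Or.inl hza
        · exact absurd (c4 ha hz h.symm haa hab hbu hza) not_false
      · exact absurd (tri ha h hz.symm hvb) not_false
    have uleaf : ∀ a, G.Adj u0 a → a ≠ aa → (a ≠ v0 ∧ ¬ G.Adj v0 a ∧ ∀ z, G.Adj a z → z = u0) := by
      intro a hua haa'
      have hav : a ≠ v0 := fun h => hadj (h ▸ hua)
      have hnva : ¬ G.Adj v0 a := fun h => hnc a hua h.symm
      refine ⟨hav, hnva, ?_⟩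
      intro z hz
      by_cases h1 : z = u0
      · exact h1
      exfalso
      rcases hD z with h | h | h | h
      · exact h1 h
      · subst h; exact hnva hz.symm
      · exact tri ha hua hz h
      · exact haa' (p3_unique ha hua hz h.symm haa hab hvb.symm
          (Ne.symm h1) hu0 hav (Ne.symm hbu) hav0).1
    have vleaf : ∀ d, G.Adj v0 d → d ≠ bb → (d ≠ u0 ∧ ¬ G.Adj u0 d ∧ ∀ z, G.Adj d z → z = v0) := by
      intro d hvd hdb
      have hdu : d ≠ u0 := fun h => hadj (h ▸ hvd).symm
      have hnud : ¬ G.Adj u0 d := fun h => hnc d h hvd.symm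
      refine ⟨hdu, hnud, ?_⟩
      intro z hz
      by_cases h1 : z = v0
      · exact h1
      exfalso
      rcases hD z with h | h | h | h
      · subst h; exact hnud hz.symm
      · exact h1 h
      · exact hdb (p3_unique ha hvd hz h.symm hvb hab.symm haa.symm
          (Ne.symm h1) (Ne.symm hu0) hdu (Ne.symm hav0) hbu).1
      · exact tri ha hvd hz h
    have hkey : (∀ a, G.Adj u0 a → a = aa) ∨ (∀ d, G.Adj v0 d → d = bb) := by
      by_contra hcon
      push_neg at hcon
      obtain ⟨⟨a, hua, haa'⟩, ⟨d, hvd, hdb⟩⟩ := hcon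
      obtain ⟨hav, hnva, aleaf⟩ := uleaf a hua haa'
      obtain ⟨hdu, hnud, dleaf⟩ := vleaf d hvd hdb
      obtain ⟨q, hqw, hDq⟩ := hp aa
      have hqa : q = a ∨ q = u0 := by
        rcases hDq a with h | h | h | h
        · exact Or.inl h.symm
        · exact absurd h haa'
        · exact Or.inr (aleaf q h.symm)
        · rcases nbraa a h with h' | h'
          · exact absurd h' hua.ne'
          · exact absurd (h' ▸ hua) hnub
      have hqd : q = d ∨ q = v0 := by
        rcases hDq d with h | h | h | h
        · exact Or.inl h.symm
        · exact absurd (h ▸ hvd : G.Adj v0 aa) (fun hh => hnav hh.symm)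
        · exact Or.inr (dleaf q h.symm)
        · rcases nbraa d h with h' | h'
          · exact absurd h' hdu
          · exact absurd h' hdb
      rcases hqa with rfl | rfl <;> rcases hqd with h | h
      · exact hnud (h ▸ hua)
      · exact hav h
      · exact hdu h.symm
      · exact hu0 h
    rcases hkey with hul | hvl
    · exact ⟨u0, aa, bb, v0, caseB2core ha hu0 hadj hD hnc haa hab hvb.symm hul hp⟩
    · refine ⟨v0, bb, aa, u0, caseB2core ha (Ne.symm hu0) (fun h => hadj h.symm) hD'
        (fun y h1 h2 => hnc y h2.symm h1.symm) hvb hab.symm haa.symm hvl hp⟩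
lemma star_iso (ha : G.IsAcyclic) (hn : 1 < Fintype.card V) {c : V}
    (hc : ∀ w, w ≠ c → G.Adj c w) :
    ∃ m, 1 ≤ m ∧ Nonempty (G ≃g completeBipartiteGraph (Fin 1) (Fin m)) := by
  classical
  refine ⟨Fintype.card V - 1, by omega, ?_⟩
  have hcard : Fintype.card {a : V // ¬ a = c} = Fintype.card V - 1 := by
    rw [Fintype.card_subtype_compl, Fintype.card_subtype_eq]
  have eL : {a : V // a = c} ≃ Fin 1 :=
    Equiv.ofUnique _ _
  have eR : {a : V // ¬ a = c} ≃ Fin (Fintype.card V - 1) :=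
    Fintype.equivFinOfCardEq hcard
  let e : V ≃ (Fin 1 ⊕ Fin (Fintype.card V - 1)) :=
    (Equiv.sumCompl (· = c)).symm.trans (Equiv.sumCongr eL eR)
  have hadj : ∀ a b : V, G.Adj a b ↔ ((a = c ∧ b ≠ c) ∨ (a ≠ c ∧ b = c)) := by
    intro a b
    constructor
    · intro h
      by_cases h1 : a = c
      · exact Or.inl ⟨h1, fun h2 => by subst h1; subst h2; exact G.loopless.irrefl _ h⟩
      · by_cases h2 : b = c
        · exact Or.inr ⟨h1, h2⟩
        · exact absurd (tri ha (hc a h1) h (hc b h2)) not_false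
    · rintro (⟨rfl, h⟩ | ⟨h, rfl⟩)
      · exact hc b h
      · exact (hc a h).symm
  have hleft : ∀ a : V, (e a).isLeft ↔ a = c := by
    intro a
    by_cases h : a = c
    · simp [e, Equiv.sumCompl_symm_apply_of_pos h, h]
    · simp [e, Equiv.sumCompl_symm_apply_of_neg h, h]
  refine ⟨⟨e, ?_⟩⟩
  intro a b
  show (completeBipartiteGraph (Fin 1) (Fin (Fintype.card V - 1))).Adj (e a) (e b) ↔ G.Adj a b
  rw [hadj]
  show ((e a).isLeft ∧ (e b).isRight ∨ (e a).isRight ∧ (e b).isLeft) ↔ _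
  simp only [← Sum.not_isLeft, hleft]
lemma p4_iso {a b c d : V} (hP : P4Struct G a b c d) : Nonempty (G ≃g pathGraph 4) := by
  classical
  obtain ⟨hab, hbc, hcd, nac, nad, nbd, dac, dad, dbd, cover⟩ := hP
  have dab : a ≠ b := hab.ne
  have dbc : b ≠ c := hbc.ne
  have dcd : c ≠ d := hcd.ne
  have nca : ¬ G.Adj c a := fun h => nac h.symm
  have nda : ¬ G.Adj d a := fun h => nad h.symm
  have ndb : ¬ G.Adj d b := fun h => nbd h.symm
  let f : V → Fin 4 := fun w => if w = a then 0 else if w = b then 1 else if w = c then 2 else 3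
  let g : Fin 4 → V := ![a, b, c, d]
  have hfg : ∀ i, f (g i) = i := by
    intro i
    fin_cases i <;> simp [f, g, dab, dbc, dcd, dac, dad, dbd, dab.symm, dbc.symm, dcd.symm,
      dac.symm, dad.symm, dbd.symm]
  have hgf : ∀ w, g (f w) = w := by
    intro w
    rcases cover w with rfl | rfl | rfl | rfl <;>
      simp [f, g, dab, dbc, dcd, dac, dad, dbd, dab.symm, dbc.symm, dcd.symm,
        dac.symm, dad.symm, dbd.symm]
  let e : V ≃ Fin 4 := ⟨f, g, hgf, hfg⟩
  refine ⟨⟨e, ?_⟩⟩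
  intro u v
  show (pathGraph 4).Adj (f u) (f v) ↔ G.Adj u v
  rcases cover u with rfl | rfl | rfl | rfl <;> rcases cover v with rfl | rfl | rfl | rfl <;>
    simp [f, pathGraph_adj, dab, dbc, dcd, dac, dad, dbd, dab.symm, dbc.symm, dcd.symm,
      dac.symm, dad.symm, dbd.symm, hab, hbc, hcd, hab.symm, hbc.symm, hcd.symm,
      nac, nad, nbd, nca, nda, ndb] <;> try decide

lemma star_props {m : ℕ} (e : G ≃g completeBipartiteGraph (Fin 1) (Fin m)) :
    ∃ c : V, (∀ w, w ≠ c → G.Adj c w) ∧ (∀ w w', w ≠ c → w' ≠ c → ¬ G.Adj w w') := by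
  set c := e.symm (Sum.inl 0) with hc
  have hec : e c = Sum.inl 0 := e.apply_symm_apply _
  have key : ∀ w : V, w ≠ c → ∃ j, e w = Sum.inr j := by
    intro w hw
    cases he : e w with
    | inl j =>
      exfalso
      apply hw
      have hj : j = 0 := Subsingleton.elim _ _
      subst hj
      have h2 := congrArg e.symm he
      rwa [e.symm_apply_apply] at h2
    | inr j => exact ⟨j, rfl⟩
  refine ⟨c, ?_, ?_⟩
  · intro w hw
    obtain ⟨j, hj⟩ := key w hw
    have h : (completeBipartiteGraph (Fin 1) (Fin m)).Adj (e c) (e w) := by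
      rw [hec, hj]; simp [completeBipartiteGraph]
    rwa [e.map_adj_iff] at h
  · intro w w' hw hw' hadj
    obtain ⟨j, hj⟩ := key w hw
    obtain ⟨j', hj'⟩ := key w' hw'
    have h : (completeBipartiteGraph (Fin 1) (Fin m)).Adj (e w) (e w') :=
      e.map_adj_iff.mpr hadj
    rw [hj, hj'] at h
    simp [completeBipartiteGraph] at h

lemma p4_props (e : G ≃g pathGraph 4) : ∃ a b c d, P4Struct G a b c d := by
  have hAdj : ∀ i j : Fin 4, G.Adj (e.symm i) (e.symm j) ↔ (pathGraph 4).Adj i j :=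
    fun i j => e.symm.map_adj_iff
  have hinj : ∀ i j : Fin 4, i ≠ j → e.symm i ≠ e.symm j := by
    intro i j hij h
    exact hij (e.toEquiv.symm.injective h)
  have hfin : ∀ i : Fin 4, i = 0 ∨ i = 1 ∨ i = 2 ∨ i = 3 := by decide
  refine ⟨e.symm 0, e.symm 1, e.symm 2, e.symm 3,
    ⟨(hAdj 0 1).mpr (by rw [pathGraph_adj]; decide),
     (hAdj 1 2).mpr (by rw [pathGraph_adj]; decide),
     (hAdj 2 3).mpr (by rw [pathGraph_adj]; decide),
     fun h => (by rw [pathGraph_adj]; decide : ¬ (pathGraph 4).Adj 0 2) ((hAdj 0 2).mp h),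
     fun h => (by rw [pathGraph_adj]; decide : ¬ (pathGraph 4).Adj 0 3) ((hAdj 0 3).mp h),
     fun h => (by rw [pathGraph_adj]; decide : ¬ (pathGraph 4).Adj 1 3) ((hAdj 1 3).mp h),
     hinj 0 2 (by decide), hinj 0 3 (by decide), hinj 1 3 (by decide), ?_⟩⟩
  intro w
  have hi : e.symm (e w) = w := e.symm_apply_apply w
  rcases hfin (e w) with h | h | h | h <;> rw [h] at hi <;>
    [exact Or.inl hi.symm; exact Or.inr (Or.inl hi.symm);
     exact Or.inr (Or.inr (Or.inl hi.symm)); exact Or.inr (Or.inr (Or.inr hi.symm))]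

lemma P4Struct.rev {a b c d : V} (hP : P4Struct G a b c d) : P4Struct G d c b a := by
  obtain ⟨hab, hbc, hcd, nac, nad, nbd, dac, dad, dbd, cover⟩ := hP
  exact ⟨hcd.symm, hbc.symm, hab.symm, fun h => nbd h.symm, fun h => nad h.symm,
    fun h => nac h.symm, Ne.symm dbd, Ne.symm dad, Ne.symm dac,
    fun w => by rcases cover w with h | h | h | h <;> tauto⟩

lemma p4_pairA {a b c d : V} (hP : P4Struct G a b c d) :
    IsGlobalDomSet G ({d, a} : Finset V) := by
  obtain ⟨hab, hbc, hcd, nac, nad, nbd, dac, dad, dbd, cover⟩ := hP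
  constructor
  · intro z
    rcases cover z with rfl | rfl | rfl | rfl
    · exact Or.inl (by simp)
    · exact Or.inr ⟨a, by simp, hab⟩
    · exact Or.inr ⟨d, by simp, hcd.symm⟩
    · exact Or.inl (by simp)
  · intro z
    rcases cover z with rfl | rfl | rfl | rfl
    · exact Or.inl (by simp)
    · exact Or.inr ⟨d, by simp, by rw [compl_adj]; exact ⟨Ne.symm dbd, fun h => nbd h.symm⟩⟩
    · exact Or.inr ⟨a, by simp, by rw [compl_adj]; exact ⟨dac, nac⟩⟩
    · exact Or.inl (by simp)

lemma p4_pairB {a b c d : V} (hP : P4Struct G a b c d) :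
    IsGlobalDomSet G ({c, b} : Finset V) := by
  obtain ⟨hab, hbc, hcd, nac, nad, nbd, dac, dad, dbd, cover⟩ := hP
  constructor
  · intro z
    rcases cover z with rfl | rfl | rfl | rfl
    · exact Or.inr ⟨b, by simp, hab.symm⟩
    · exact Or.inl (by simp)
    · exact Or.inl (by simp)
    · exact Or.inr ⟨c, by simp, hcd⟩
  · intro z
    rcases cover z with rfl | rfl | rfl | rfl
    · exact Or.inr ⟨c, by simp, by rw [compl_adj]; exact ⟨Ne.symm dac, fun h => nac h.symm⟩⟩
    · exact Or.inl (by simp)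
    · exact Or.inl (by simp)
    · exact Or.inr ⟨b, by simp, by rw [compl_adj]; exact ⟨dbd, nbd⟩⟩

theorem gc_tree_eq_card_iff (G : SimpleGraph V) (ht : G.IsTree) (hn : 1 < Fintype.card V) :
    globalCoalitionNumber G = Fintype.card V ↔
      (∃ m : ℕ, 1 ≤ m ∧ Nonempty (G ≃g completeBipartiteGraph (Fin 1) (Fin m))) ∨
      Nonempty (G ≃g pathGraph 4) := by
  constructor
  · intro h
    have hpair := L2 hn h
    have hpD : ∀ x : V, ∃ p, p ≠ x ∧ Dom G p x := by
      intro x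
      obtain ⟨u, hux, hglob⟩ := hpair x
      refine ⟨u, hux, ?_⟩
      intro w
      rcases hglob.1 w with hw | ⟨y, hy, hadj⟩
      · simp at hw
        rcases hw with rfl | rfl
        · exact Or.inl rfl
        · exact Or.inr (Or.inl rfl)
      · simp at hy
        rcases hy with rfl | rfl
        · exact Or.inr (Or.inr (Or.inl hadj))
        · exact Or.inr (Or.inr (Or.inr hadj))
    rcases structure_main ht.IsAcyclic ht.isConnected hn hpD with ⟨c, hc⟩ | ⟨a, b, c, d, hP⟩
    · exact Or.inl (star_iso ht.IsAcyclic hn hc)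
    · exact Or.inr (p4_iso hP)
  · rintro (⟨m, hm, he⟩ | he) <;> obtain ⟨e⟩ := he
    · obtain ⟨c, hc, hind⟩ := star_props e
      apply L1
      · intro v
        by_cases hv : v = c
        · subst hv
          obtain ⟨w, hw⟩ := Fintype.exists_ne_of_one_lt_card hn v
          exact ⟨w, hc w hw⟩
        · exact ⟨c, (hc v hv).symm⟩
      · intro v
        by_cases hv : v = c
        · subst hv
          obtain ⟨w, hw⟩ := Fintype.exists_ne_of_one_lt_card hn v
          refine ⟨w, hw, ?_, ?_⟩
          · intro z
            by_cases hz : z = v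
            · exact Or.inl (by simp [hz])
            · exact Or.inr ⟨v, by simp, hc z hz⟩
          · intro z
            by_cases hz1 : z = w
            · exact Or.inl (by simp [hz1])
            by_cases hz2 : z = v
            · exact Or.inl (by simp [hz2])
            exact Or.inr ⟨w, by simp, by
              rw [compl_adj]
              exact ⟨fun hh => hz1 hh.symm, hind w z hw hz2⟩⟩
        · refine ⟨c, fun h => hv h.symm, ?_, ?_⟩
          · intro z
            by_cases hz : z = c
            · exact Or.inl (by simp [hz])
            · exact Or.inr ⟨c, by simp, hc z hz⟩
          · intro z
            by_cases hz1 : z = v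
            · exact Or.inl (by simp [hz1])
            by_cases hz2 : z = c
            · exact Or.inl (by simp [hz2])
            exact Or.inr ⟨v, by simp, by
              rw [compl_adj]
              exact ⟨fun hh => hz1 hh.symm, hind v z hv hz2⟩⟩
    · obtain ⟨a, b, c, d, hP⟩ := p4_props e
      apply L1
      · intro v
        rcases hP.cover v with rfl | rfl | rfl | rfl
        · exact ⟨b, hP.hab⟩
        · exact ⟨c, hP.hbc⟩
        · exact ⟨b, hP.hbc.symm⟩
        · exact ⟨c, hP.hcd.symm⟩
      · intro v
        rcases hP.cover v with rfl | rfl | rfl | rfl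
        · exact ⟨d, Ne.symm hP.dad, p4_pairA hP⟩
        · exact ⟨c, hP.hbc.ne', p4_pairB hP⟩
        · exact ⟨b, hP.hbc.ne, p4_pairB hP.rev⟩
        · exact ⟨a, hP.dad, p4_pairA hP.rev⟩
end

section
/- Let G be a finite triangle-free simple graph of order n ≥ 4. Then GC(G) = n if and only if G is a star, or G is isomorphic to K_{r,r} minus a perfect matching for some r ≥ 2, or G is isomorphic to K_{r,s} minus a (possibly empty) matching M with |M| < min{r,s} for some r,s ≥ 2. -/
set_option linter.unusedSectionVars false
set_option linter.unreachableTactic false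
set_option linter.unusedTactic false

open SimpleGraph Finset

variable {V : Type*} [Fintype V] [DecidableEq V]

namespace GCProof

variable {G : SimpleGraph V}

lemma tri (htf : G.CliqueFree 3) {a b c : V} (hab : G.Adj a b) (hac : G.Adj a c)
    (hbc : G.Adj b c) : False :=
  htf {a, b, c} (SimpleGraph.is3Clique_triple_iff.mpr ⟨hab, hac, hbc⟩)

/-- adjacency-only characterization of a pair being a global dominating set -/
def PairCond (G : SimpleGraph V) (v u : V) : Prop :=
  ∀ w, w ≠ v → w ≠ u → (G.Adj v w ∨ G.Adj u w) ∧ (¬ G.Adj v w ∨ ¬ G.Adj u w)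

lemma pairCond_symm {v u : V} (h : PairCond G v u) : PairCond G u v := by
  intro w hwu hwv
  obtain ⟨h1, h2⟩ := h w hwv hwu
  exact ⟨h1.symm, h2.symm⟩

lemma isGlobalDomSet_pair_iff {v u : V} :
    IsGlobalDomSet G {v, u} ↔ PairCond G v u := by
  constructor
  · rintro ⟨h1, h2⟩ w hwv hwu
    constructor
    · obtain hw | ⟨x, hx, hadj⟩ := h1 w
      · simp only [Finset.mem_insert, Finset.mem_singleton] at hw
        tauto
      · simp only [Finset.mem_insert, Finset.mem_singleton] at hx
        rcases hx with rfl | rfl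
        · exact Or.inl hadj
        · exact Or.inr hadj
    · obtain hw | ⟨x, hx, hadj⟩ := h2 w
      · simp only [Finset.mem_insert, Finset.mem_singleton] at hw
        tauto
      · rw [SimpleGraph.compl_adj] at hadj
        simp only [Finset.mem_insert, Finset.mem_singleton] at hx
        rcases hx with rfl | rfl
        · exact Or.inl hadj.2
        · exact Or.inr hadj.2
  · intro h
    constructor
    · intro w
      by_cases hwv : w = v
      · exact Or.inl (by simp [hwv])
      by_cases hwu : w = u
      · exact Or.inl (by simp [hwu])
      obtain ⟨h1, _⟩ := h w hwv hwu
      rcases h1 with h1 | h1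
      · exact Or.inr ⟨v, by simp, h1⟩
      · exact Or.inr ⟨u, by simp, h1⟩
    · intro w
      by_cases hwv : w = v
      · exact Or.inl (by simp [hwv])
      by_cases hwu : w = u
      · exact Or.inl (by simp [hwu])
      obtain ⟨_, h2⟩ := h w hwv hwu
      rcases h2 with h2 | h2
      · exact Or.inr ⟨v, by simp, (SimpleGraph.compl_adj _ _ _).mpr ⟨Ne.symm hwv, h2⟩⟩
      · exact Or.inr ⟨u, by simp, (SimpleGraph.compl_adj _ _ _).mpr ⟨Ne.symm hwu, h2⟩⟩

def PairProp (G : SimpleGraph V) : Prop :=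
  ∀ v : V, ∃ u, u ≠ v ∧ PairCond G v u

lemma not_gds_singleton (h2 : 2 ≤ Fintype.card V) (v : V) :
    ¬ IsGlobalDomSet G {v} := by
  rintro ⟨h1, h2'⟩
  obtain ⟨w, hw⟩ := Fintype.exists_ne_of_one_lt_card (by omega) v
  obtain h | ⟨x, hx, hadj⟩ := h1 w
  · exact hw (by simpa using h)
  · simp only [Finset.mem_singleton] at hx
    subst hx
    obtain h' | ⟨y, hy, hadj'⟩ := h2' w
    · exact hw (by simpa using h')
    · simp only [Finset.mem_singleton] at hy
      subst hy
      rw [SimpleGraph.compl_adj] at hadj'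
      exact hadj'.2 hadj

lemma gc_eq_card_iff (h2 : 2 ≤ Fintype.card V) (G : SimpleGraph V) :
    globalCoalitionNumber G = Fintype.card V ↔ PairProp G := by
  have hbdd : ∀ n ∈ {n | ∃ π : Finpartition (Finset.univ : Finset V),
      IsGCPartition G π ∧ π.parts.card = n}, n ≤ Fintype.card V := by
    rintro n ⟨π, _, rfl⟩
    simpa using π.card_parts_le_card
  constructor
  · intro h
    have hne : {n | ∃ π : Finpartition (Finset.univ : Finset V),
        IsGCPartition G π ∧ π.parts.card = n}.Nonempty := by
      by_contra hne
      rw [Set.not_nonempty_iff_eq_empty] at hne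
      rw [globalCoalitionNumber, hne] at h
      simp at h
      omega
    have hmem := Nat.sSup_mem hne ⟨Fintype.card V, fun n hn => hbdd n hn⟩
    rw [globalCoalitionNumber] at h
    rw [h] at hmem
    obtain ⟨π, hgc, hcard⟩ := hmem
    have hsing : ∀ t ∈ π.parts, t.card = 1 := by
      by_contra hs
      push_neg at hs
      obtain ⟨t0, ht0, ht0c⟩ := hs
      have h1 : ∀ t ∈ π.parts, 1 ≤ t.card := fun t ht =>
        Finset.card_pos.mpr (π.nonempty_of_mem_parts ht)
      have hlt : ∑ t ∈ π.parts, 1 < ∑ t ∈ π.parts, t.card :=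
        Finset.sum_lt_sum h1 ⟨t0, ht0, by have := h1 t0 ht0; omega⟩
      rw [π.sum_card_parts] at hlt
      simp only [Finset.sum_const, smul_eq_mul, mul_one] at hlt
      rw [hcard] at hlt
      simp at hlt
    intro v
    obtain ⟨t, ht, hvt⟩ := π.exists_mem (Finset.mem_univ v)
    obtain ⟨w, rfl⟩ := Finset.card_eq_one.mp (hsing t ht)
    rw [Finset.mem_singleton] at hvt
    subst hvt
    obtain ⟨_, B, hB, hBne, _, _, _, hgds⟩ := hgc _ ht
    obtain ⟨u, rfl⟩ := Finset.card_eq_one.mp (hsing B hB)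
    refine ⟨u, ?_, ?_⟩
    · rintro rfl
      exact hBne rfl
    · rw [← isGlobalDomSet_pair_iff]
      simpa using hgds
  · intro hP
    have hgc : IsGCPartition G (⊥ : Finpartition (Finset.univ : Finset V)) := by
      intro A hA
      rw [Finpartition.mem_bot_iff] at hA
      obtain ⟨a, _, rfl⟩ := hA
      obtain ⟨u, hu, hc⟩ := hP a
      refine ⟨not_gds_singleton h2 a, {u}, ?_, ?_, ?_, not_gds_singleton h2 a,
        not_gds_singleton h2 u, ?_⟩
      · rw [Finpartition.mem_bot_iff]; exact ⟨u, Finset.mem_univ u, rfl⟩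
      · simp [Finset.singleton_inj]; exact hu
      · simp [Finset.disjoint_singleton]; exact fun h => hu h.symm
      · have : ({a} ∪ {u} : Finset V) = {a, u} := by
          ext x; simp [Finset.mem_union, Finset.mem_insert]
        rw [this]
        exact isGlobalDomSet_pair_iff.mpr hc
    have hmem : Fintype.card V ∈ {n | ∃ π : Finpartition (Finset.univ : Finset V),
        IsGCPartition G π ∧ π.parts.card = n} :=
      ⟨⊥, hgc, by simp [Finpartition.card_bot]⟩
    refine le_antisymm ?_ ?_
    · exact csSup_le ⟨_, hmem⟩ hbdd
    · exact le_csSup ⟨Fintype.card V, fun n hn => hbdd n hn⟩ hmem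

lemma pairProp_of_iso {W : Type*} {H : SimpleGraph W} (e : G ≃g H) (hP : PairProp G) :
    PairProp H := by
  intro v
  obtain ⟨u, hu, hc⟩ := hP (e.symm v)
  refine ⟨e u, fun h => hu (by rw [← h]; simp), ?_⟩
  intro w hwv hwu
  have h1 : e.symm w ≠ e.symm v := fun h => hwv (by simpa using congrArg e h)
  have h2 : e.symm w ≠ u := fun h => hwu (by rw [← h]; simp)
  obtain ⟨ha, hb⟩ := hc (e.symm w) h1 h2
  have hvw : G.Adj (e.symm v) (e.symm w) ↔ H.Adj v w := (e.symm : H ≃g G).map_adj_iff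
  have huw : G.Adj u (e.symm w) ↔ H.Adj (e u) w := by
    constructor
    · intro h; have := (e : G ≃g H).map_adj_iff.mpr h; simpa using this
    · intro h
      have : H.Adj (e u) (e (e.symm w)) := by simpa using h
      exact (e : G ≃g H).map_adj_iff.mp this
  rw [hvw, huw] at ha hb
  exact ⟨ha, hb⟩

/-- PairProp for the star -/
lemma pairProp_star (m : ℕ) (hm : 1 ≤ m) :
    PairProp (completeBipartiteGraph (Fin 1) (Fin m)) := by
  have hm0 : (0 : ℕ) < m := hm
  intro v
  match v with
  | Sum.inl i =>
    refine ⟨Sum.inr ⟨0, hm0⟩, by simp, ?_⟩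
    intro w hwv hwu
    match w with
    | Sum.inl j => exact absurd (by omega : j = i) (fun h => hwv (by rw [h]))
    | Sum.inr j => exact ⟨Or.inl (by simp), Or.inr (by simp)⟩
  | Sum.inr j =>
    refine ⟨Sum.inl ⟨0, by omega⟩, by simp, ?_⟩
    intro w hwv hwu
    match w with
    | Sum.inl i => exact absurd (by omega : i = (⟨0, by omega⟩ : Fin 1)) (fun h => hwu (by rw [h]))
    | Sum.inr k => exact ⟨Or.inr (by simp), Or.inl (by simp)⟩

/-- PairProp for complete bipartite minus a matching, provided every vertex is either
matched or there are unmatched vertices on both sides. -/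
lemma pairProp_sub_matching {α β : Type*}
    (M : SimpleGraph.Subgraph (completeBipartiteGraph α β)) (hM : M.IsMatching)
    (hcov : ∀ v, v ∈ M.verts ∨
      ((∃ i : α, Sum.inl i ∉ M.verts) ∧ (∃ j : β, Sum.inr j ∉ M.verts))) :
    PairProp (completeBipartiteGraph α β \ M.spanningCoe) := by
  have hadj : ∀ x y, (completeBipartiteGraph α β \ M.spanningCoe).Adj x y ↔
      (completeBipartiteGraph α β).Adj x y ∧ ¬ M.Adj x y := by
    intro x y; rw [SimpleGraph.sdiff_adj]; simp
  intro v
  by_cases hv : v ∈ M.verts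
  · obtain ⟨u, hu, huniq⟩ := hM hv
    have hbase : (completeBipartiteGraph α β).Adj v u := M.adj_sub hu
    have huv : u ≠ v := fun h => (completeBipartiteGraph α β).irrefl (h ▸ hbase)
    have huverts : u ∈ M.verts := M.edge_vert (M.adj_symm hu)
    obtain ⟨u', hu', huniq'⟩ := hM huverts
    have hu'v : u' = v := (huniq' v (M.adj_symm hu)).symm
    refine ⟨u, huv, ?_⟩
    intro w hwv hwu
    constructor
    · rcases (show (completeBipartiteGraph α β).Adj v w ∨ (completeBipartiteGraph α β).Adj u w by
        rcases v with i|i <;> rcases u with j|j <;> rcases w with k|k <;>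
          first
            | (exfalso; revert hbase; simp; done)
            | (left; simp; done)
            | (right; simp; done)) with h | h
      · exact Or.inl ((hadj v w).mpr ⟨h, fun hm => hwu (huniq w hm)⟩)
      · refine Or.inr ((hadj u w).mpr ⟨h, fun hm => hwv ?_⟩)
        rw [← hu'v]; exact (huniq' w hm) ▸ rfl
    · rcases (show ¬ (completeBipartiteGraph α β).Adj v w ∨
          ¬ (completeBipartiteGraph α β).Adj u w by
        rcases v with i|i <;> rcases u with j|j <;> rcases w with k|k <;>
          first
            | (exfalso; revert hbase; simp; done)
            | (left; simp; done)
            | (right; simp; done)) with h | h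
      · exact Or.inl (fun hc => h ((hadj v w).mp hc).1)
      · exact Or.inr (fun hc => h ((hadj u w).mp hc).1)
  · obtain ⟨⟨i0, hi0⟩, ⟨j0, hj0⟩⟩ := (hcov v).resolve_left hv
    have hvadj : ∀ y, ¬ M.Adj v y := fun y hy => hv (M.edge_vert hy)
    have hi0adj : ∀ y, ¬ M.Adj (Sum.inl i0) y := fun y hy => hi0 (M.edge_vert hy)
    have hj0adj : ∀ y, ¬ M.Adj (Sum.inr j0) y := fun y hy => hj0 (M.edge_vert hy)
    rcases v with i | j
    · refine ⟨Sum.inr j0, by simp, ?_⟩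
      intro w hwv hwu
      rcases w with a | b
      · exact ⟨Or.inr ((hadj _ _).mpr ⟨by simp, hj0adj _⟩),
          Or.inl (fun hc => by simpa using ((hadj _ _).mp hc).1)⟩
      · exact ⟨Or.inl ((hadj _ _).mpr ⟨by simp, hvadj _⟩),
          Or.inr (fun hc => by simpa using ((hadj _ _).mp hc).1)⟩
    · refine ⟨Sum.inl i0, by simp, ?_⟩
      intro w hwv hwu
      rcases w with a | b
      · exact ⟨Or.inl ((hadj _ _).mpr ⟨by simp, hvadj _⟩),
          Or.inr (fun hc => by simpa using ((hadj _ _).mp hc).1)⟩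
      · exact ⟨Or.inr ((hadj _ _).mpr ⟨by simp, hi0adj _⟩),
          Or.inl (fun hc => by simpa using ((hadj _ _).mp hc).1)⟩


lemma exists_unmatched_left {α β : Type*} [Fintype α] [Fintype β]
    (M : SimpleGraph.Subgraph (completeBipartiteGraph α β)) (hM : M.IsMatching)
    (h : M.edgeSet.ncard < Fintype.card α) : ∃ i, Sum.inl i ∉ M.verts := by
  by_contra hall
  push_neg at hall
  have hw : ∀ i : α, M.Adj (Sum.inl i) ((hM (hall i)).exists.choose) := fun i =>
    (hM (hall i)).exists.choose_spec
  have finj : Function.Injective (fun i : α =>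
      (⟨s(Sum.inl i, (hM (hall i)).exists.choose), by
      rw [SimpleGraph.Subgraph.mem_edgeSet]; exact hw i⟩ : M.edgeSet)) := by
    intro i i' hii
    simp only [Subtype.mk_eq_mk, Sym2.eq_iff] at hii
    rcases hii with ⟨h1, _⟩ | ⟨h1, h2⟩
    · exact Sum.inl_injective h1
    · exfalso
      have hadj := M.adj_sub (hw i')
      rw [← h1] at hadj
      simpa using hadj
  have hcard : Fintype.card α ≤ M.edgeSet.ncard := by
    rw [← Nat.card_coe_set_eq, ← Nat.card_eq_fintype_card]
    exact Nat.card_le_card_of_injective _ finj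
  omega

lemma exists_unmatched_right {α β : Type*} [Fintype α] [Fintype β]
    (M : SimpleGraph.Subgraph (completeBipartiteGraph α β)) (hM : M.IsMatching)
    (h : M.edgeSet.ncard < Fintype.card β) : ∃ j, Sum.inr j ∉ M.verts := by
  by_contra hall
  push_neg at hall
  have hw : ∀ j : β, M.Adj (Sum.inr j) ((hM (hall j)).exists.choose) := fun j =>
    (hM (hall j)).exists.choose_spec
  have finj : Function.Injective (fun j : β =>
      (⟨s(Sum.inr j, (hM (hall j)).exists.choose), by
      rw [SimpleGraph.Subgraph.mem_edgeSet]; exact hw j⟩ : M.edgeSet)) := by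
    intro j j' hjj
    simp only [Subtype.mk_eq_mk, Sym2.eq_iff] at hjj
    rcases hjj with ⟨h1, _⟩ | ⟨h1, h2⟩
    · exact Sum.inr_injective h1
    · exfalso
      have hadj := M.adj_sub (hw j')
      rw [← h1] at hadj
      simpa using hadj
  have hcard : Fintype.card β ≤ M.edgeSet.ncard := by
    rw [← Nat.card_coe_set_eq, ← Nat.card_eq_fintype_card]
    exact Nat.card_le_card_of_injective _ finj
  omega

/-- The backward direction of the main theorem, at the level of PairProp. -/
lemma backward {G : SimpleGraph V}
    (h : (∃ m : ℕ, 1 ≤ m ∧ Nonempty (G ≃g completeBipartiteGraph (Fin 1) (Fin m))) ∨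
      (∃ r : ℕ, 2 ≤ r ∧
        ∃ M : SimpleGraph.Subgraph (completeBipartiteGraph (Fin r) (Fin r)),
          M.IsPerfectMatching ∧
          Nonempty (G ≃g (completeBipartiteGraph (Fin r) (Fin r) \ M.spanningCoe))) ∨
      (∃ r s : ℕ, 2 ≤ r ∧ 2 ≤ s ∧
        ∃ M : SimpleGraph.Subgraph (completeBipartiteGraph (Fin r) (Fin s)),
          M.IsMatching ∧ M.edgeSet.ncard < min r s ∧
          Nonempty (G ≃g (completeBipartiteGraph (Fin r) (Fin s) \ M.spanningCoe)))) :
    PairProp G := by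
  rcases h with ⟨m, hm, ⟨e⟩⟩ | ⟨r, hr, M, hpm, ⟨e⟩⟩ | ⟨r, s, hr, hs, M, hm, hsize, ⟨e⟩⟩
  · exact pairProp_of_iso e.symm (pairProp_star m hm)
  · exact pairProp_of_iso e.symm
      (pairProp_sub_matching M hpm.1 (fun v => Or.inl (hpm.2 v)))
  · refine pairProp_of_iso e.symm (pairProp_sub_matching M hm (fun v => Or.inr ⟨?_, ?_⟩))
    · exact exists_unmatched_left M hm (by simpa using lt_of_lt_of_le hsize (min_le_left r s))
    · exact exists_unmatched_right M hm (by simpa using lt_of_lt_of_le hsize (min_le_right r s))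

/-- the two sides of the bipartition -/
def Setup (G : SimpleGraph V) (A B : Finset V) : Prop :=
  (∀ w, w ∈ A ∨ w ∈ B) ∧ (∀ w, ¬ (w ∈ A ∧ w ∈ B)) ∧
  (∀ x ∈ A, ∀ y ∈ A, ¬ G.Adj x y) ∧ (∀ x ∈ B, ∀ y ∈ B, ¬ G.Adj x y)

lemma Setup.symm {A B : Finset V} (h : Setup G A B) : Setup G B A :=
  ⟨fun w => (h.1 w).symm, fun w hw => h.2.1 w ⟨hw.2, hw.1⟩, h.2.2.2, h.2.2.1⟩

lemma sideA_indep (htf : G.CliqueFree 3) {v0 u0 : V} (hc : PairCond G v0 u0)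
    {A : Finset V} (hmem : ∀ x, x ∈ A → x = v0 ∨ G.Adj u0 x) :
    ∀ x ∈ A, ∀ y ∈ A, ¬ G.Adj x y := by
  intro x hx' y hy' hxy
  have hx := hmem x hx'
  have hy := hmem y hy'
  rcases hx with hxv | hx
  · rcases hy with hyv | hy
    · rw [hxv, hyv] at hxy
      exact G.irrefl hxy
    · rw [hxv] at hxy
      by_cases h0 : G.Adj v0 u0
      · exact tri htf h0 hxy hy
      · have hyv' : y ≠ v0 := fun h => G.irrefl (h ▸ hxy)
        have hyu : y ≠ u0 := fun h => G.irrefl (h ▸ hy)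
        rcases (hc y hyv' hyu).2 with h | h
        · exact h hxy
        · exact h hy
  · rcases hy with hyv | hy
    · rw [hyv] at hxy
      by_cases h0 : G.Adj v0 u0
      · exact tri htf h0 hxy.symm hx
      · have hxv : x ≠ v0 := fun h => G.irrefl (h ▸ hxy.symm)
        have hxu : x ≠ u0 := fun h => G.irrefl (h ▸ hx)
        rcases (hc x hxv hxu).2 with h | h
        · exact h hxy.symm
        · exact h hx
    · exact tri htf hx hy hxy

lemma setup_of_pair (htf : G.CliqueFree 3) {v0 u0 : V} (hne : u0 ≠ v0)
    (hc : PairCond G v0 u0) :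
    ∃ A B : Finset V, Setup G A B ∧ v0 ∈ A ∧ u0 ∈ B := by
  classical
  refine ⟨insert v0 (Finset.univ.filter (fun w => G.Adj u0 w)),
    insert u0 (Finset.univ.filter (fun w => G.Adj v0 w)), ?_, by simp, by simp⟩
  have hmemA : ∀ x, x ∈ insert v0 (Finset.univ.filter (fun w => G.Adj u0 w)) ↔
      (x = v0 ∨ G.Adj u0 x) := by intro x; simp
  have hmemB : ∀ x, x ∈ insert u0 (Finset.univ.filter (fun w => G.Adj v0 w)) ↔
      (x = u0 ∨ G.Adj v0 x) := by intro x; simp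
  refine ⟨?_, ?_, sideA_indep htf hc (fun x hx => (hmemA x).mp hx),
    sideA_indep htf (pairCond_symm hc) (fun x hx => (hmemB x).mp hx)⟩
  · intro w
    by_cases hwv : w = v0
    · exact Or.inl ((hmemA w).mpr (Or.inl hwv))
    by_cases hwu : w = u0
    · exact Or.inr ((hmemB w).mpr (Or.inl hwu))
    rcases (hc w hwv hwu).1 with h | h
    · exact Or.inr ((hmemB w).mpr (Or.inr h))
    · exact Or.inl ((hmemA w).mpr (Or.inr h))
  · intro w ⟨hwA, hwB⟩
    rw [hmemA] at hwA
    rw [hmemB] at hwB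
    rcases hwA with hwv0 | hwA
    · rcases hwB with h | h
      · exact hne (h ▸ hwv0)
      · rw [hwv0] at h
        exact G.irrefl h
    · rcases hwB with hwu0 | hwB
      · rw [hwu0] at hwA
        exact G.irrefl hwA
      · have hwv : w ≠ v0 := fun h => G.irrefl (h ▸ hwB)
        have hwu : w ≠ u0 := fun h => G.irrefl (h ▸ hwA)
        by_cases h0 : G.Adj v0 u0
        · exact tri htf h0 hwB hwA
        · rcases (hc w hwv hwu).2 with h | h
          · exact h hwB
          · exact h hwA

lemma claimD {A B : Finset V} (hP : PairProp G) (hst : Setup G A B) (hB2 : 2 ≤ B.card) :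
    ∀ x ∈ A, ∃ y ∈ B, (∀ b ∈ B, b ≠ y → G.Adj x b) ∧ (∀ a ∈ A, a ≠ x → G.Adj y a) := by
  obtain ⟨hcov, hdisj, hAind, hBind⟩ := hst
  have hne : ∀ {a b : V}, a ∈ A → b ∈ B → a ≠ b := fun {a b} ha hb h =>
    hdisj b ⟨h ▸ ha, hb⟩
  intro x hx
  obtain ⟨z, hzx, hc⟩ := hP x
  by_cases hzB : z ∈ B
  · refine ⟨z, hzB, ?_, ?_⟩
    · intro b hbB hbz
      rcases (hc b (hne hx hbB).symm hbz).1 with h | h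
      · exact h
      · exact absurd h (hBind z hzB b hbB)
    · intro a haA hax
      rcases (hc a hax (hne haA hzB)).1 with h | h
      · exact absurd h (hAind x hx a haA)
      · exact h
  · have hzA : z ∈ A := (hcov z).resolve_right hzB
    have hAxz : ∀ a ∈ A, a = x ∨ a = z := by
      intro a haA
      by_contra hcon
      push_neg at hcon
      rcases (hc a hcon.1 hcon.2).1 with h | h
      · exact hAind x hx a haA h
      · exact hAind z hzA a haA h
    by_cases hex : ∃ b ∈ B, ¬ G.Adj x b
    · obtain ⟨b1, hb1B, hb1x⟩ := hex
      have hb1z : G.Adj z b1 := by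
        rcases (hc b1 (hne hx hb1B).symm (hne hzA hb1B).symm).1 with h | h
        · exact absurd h hb1x
        · exact h
      obtain ⟨w, hwb1, hcw⟩ := hP b1
      by_cases hwA : w ∈ A
      · rcases hAxz w hwA with hwx' | hwz'
        · -- w = x
          rw [hwx'] at hcw
          refine ⟨b1, hb1B, ?_, ?_⟩
          · intro b hbB hbb1
            rcases (hcw b hbb1 (hne hx hbB).symm).1 with h | h
            · exact absurd h (hBind b1 hb1B b hbB)
            · exact h
          · intro a haA hax
            rcases hAxz a haA with rfl | rfl
            · exact absurd rfl hax
            · exact hb1z.symm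
        · -- w = z : contradiction via x
          rw [hwz'] at hcw
          exfalso
          rcases (hcw x (hne hx hb1B) (Ne.symm hzx)).1 with h | h
          · exact hb1x h.symm
          · exact hAind z hzA x hx h
      · have hwB : w ∈ B := (hcov w).resolve_left hwA
        have hwx : G.Adj w x := by
          rcases (hcw x (hne hx hb1B) (hne hx hwB)).1 with h | h
          · exact absurd h.symm hb1x
          · exact h
        refine ⟨b1, hb1B, ?_, ?_⟩
        · intro b hbB hbb1
          by_cases hbw : b = w
          · exact hbw ▸ hwx.symm
          · exfalso
            rcases (hcw b hbb1 hbw).1 with h | h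
            · exact hBind b1 hb1B b hbB h
            · exact hBind w hwB b hbB h
        · intro a haA hax
          rcases hAxz a haA with rfl | rfl
          · exact absurd rfl hax
          · exact hb1z.symm
    · push_neg at hex
      by_cases hzb : ∃ b ∈ B, G.Adj z b
      · obtain ⟨b, hbB, hzb'⟩ := hzb
        refine ⟨b, hbB, fun b' hb' _ => hex b' hb', ?_⟩
        intro a haA hax
        rcases hAxz a haA with rfl | rfl
        · exact absurd rfl hax
        · exact hzb'.symm
      · exfalso
        push_neg at hzb
        have hziso : ∀ t, ¬ G.Adj z t := by
          intro t ht
          rcases hcov t with h | h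
          · exact hAind z hzA t h ht
          · exact hzb t h ht
        have hBne : B.Nonempty := Finset.card_pos.mp (by omega)
        obtain ⟨b1, hb1B⟩ := hBne
        obtain ⟨w, hwb1, hcw⟩ := hP b1
        have hwz : w = z := by
          by_contra hwz
          rcases (hcw z (hne hzA hb1B) (fun h => hwz h.symm)).1 with h | h
          · exact hziso b1 h.symm
          · exact hziso w h.symm
        subst hwz
        obtain ⟨b', hb'B, hb'ne⟩ := Finset.exists_mem_ne (show (1:ℕ) < B.card by omega) b1
        rcases (hcw b' hb'ne (hne hzA hb'B).symm).1 with h | h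
        · exact hBind b1 hb1B b' hb'B h
        · exact hziso b' h

lemma miss_unique {A B : Finset V} (hP : PairProp G) (hst : Setup G A B)
    (hB2 : 2 ≤ B.card) :
    ∀ x ∈ A, ∀ b1 ∈ B, ∀ b2 ∈ B, ¬ G.Adj x b1 → ¬ G.Adj x b2 → b1 = b2 := by
  intro x hx b1 hb1 b2 hb2 h1 h2
  obtain ⟨y, hyB, hy1, _⟩ := claimD hP hst hB2 x hx
  have e1 : b1 = y := by
    by_contra h
    exact h1 (hy1 b1 hb1 h)
  have e2 : b2 = y := by
    by_contra h
    exact h2 (hy1 b2 hb2 h)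
  rw [e1, e2]

lemma star_case {A B : Finset V} {c : V} (hP : PairProp G) (hst : Setup G A B)
    (hA1 : A = {c}) (hB3 : 3 ≤ B.card) :
    ∀ w, w ≠ c → G.Adj c w := by
  obtain ⟨hcov, hdisj, hAind, hBind⟩ := hst
  have hcB : c ∉ B := fun h => hdisj c ⟨by simp [hA1], h⟩
  have hBmem : ∀ w, w ≠ c → w ∈ B := by
    intro w hw
    rcases hcov w with h | h
    · exact absurd (by simpa [hA1] using h) hw
    · exact h
  have step1 : ∀ w ∈ B, ∀ b ∈ B, b ≠ w → G.Adj c b := by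
    intro w hwB b hbB hbw
    obtain ⟨z, hzw, hcz⟩ := hP w
    have hzc : z = c := by
      by_contra hzc
      have hzB : z ∈ B := hBmem z hzc
      obtain ⟨t, htB, ht⟩ : ∃ t ∈ B, t ≠ w ∧ t ≠ z := by
        have h2 : ((B.erase w).erase z).Nonempty := by
          apply Finset.card_pos.mp
          have h1' := Finset.pred_card_le_card_erase (s := B.erase w) (a := z)
          have h2' := Finset.pred_card_le_card_erase (s := B) (a := w)
          omega
        obtain ⟨t, htmem⟩ := h2
        rw [Finset.mem_erase] at htmem
        obtain ⟨htz, htmem'⟩ := htmem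
        rw [Finset.mem_erase] at htmem'
        exact ⟨t, htmem'.2, htmem'.1, htz⟩
      rcases (hcz t ht.1 ht.2).1 with h | h
      · exact hBind w hwB t htB h
      · exact hBind z hzB t htB h
    rw [hzc] at hcz
    have hbc : b ≠ c := fun h => hcB (h ▸ hbB)
    rcases (hcz b hbw hbc).1 with h | h
    · exact absurd h (hBind w hwB b hbB)
    · exact h
  intro w hw
  have hwB := hBmem w hw
  obtain ⟨w', hw'B, hw'ne⟩ := Finset.exists_mem_ne (show (1:ℕ) < B.card by omega) w
  exact step1 w' hw'B w hwB (Ne.symm hw'ne)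


def splitEquiv (A B : Finset V) (hcov : ∀ w, w ∈ A ∨ w ∈ B)
    (hdisj : ∀ w, ¬ (w ∈ A ∧ w ∈ B)) : V ≃ ({x // x ∈ A} ⊕ {x // x ∈ B}) where
  toFun x := if h : x ∈ A then Sum.inl ⟨x, h⟩ else Sum.inr ⟨x, (hcov x).resolve_left h⟩
  invFun := Sum.elim Subtype.val Subtype.val
  left_inv x := by by_cases h : x ∈ A <;> simp [h]
  right_inv p := by
    rcases p with ⟨x, hx⟩ | ⟨x, hx⟩
    · simp [hx]
    · have hxA : x ∉ A := fun h => hdisj x ⟨h, hx⟩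
      simp [hxA]

lemma exists_good_equiv {A B : Finset V} (hcov : ∀ w, w ∈ A ∨ w ∈ B)
    (hdisj : ∀ w, ¬ (w ∈ A ∧ w ∈ B)) {r s : ℕ} (hr : A.card = r) (hs : B.card = s) :
    ∃ e : V ≃ (Fin r ⊕ Fin s),
      (∀ x ∈ A, ∃ i, e x = Sum.inl i) ∧ (∀ x ∈ B, ∃ j, e x = Sum.inr j) ∧
      (∀ i, e.symm (Sum.inl i) ∈ A) ∧ (∀ j, e.symm (Sum.inr j) ∈ B) := by
  have hA : Fintype.card {x // x ∈ A} = r := by rw [Fintype.card_coe]; exact hr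
  have hB : Fintype.card {x // x ∈ B} = s := by rw [Fintype.card_coe]; exact hs
  refine ⟨(splitEquiv A B hcov hdisj).trans
    (Equiv.sumCongr (Fintype.equivFinOfCardEq hA) (Fintype.equivFinOfCardEq hB)), ?_, ?_, ?_, ?_⟩
  · intro x hx
    exact ⟨Fintype.equivFinOfCardEq hA ⟨x, hx⟩, by simp [splitEquiv, hx]⟩
  · intro x hx
    have hxA : x ∉ A := fun h => hdisj x ⟨h, hx⟩
    exact ⟨Fintype.equivFinOfCardEq hB ⟨x, (hcov x).resolve_left hxA⟩,
      by simp [splitEquiv, hxA]⟩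
  · intro i
    simp only [Equiv.symm_trans_apply, Equiv.sumCongr_symm, Equiv.sumCongr_apply,
      Sum.map_inl]
    exact (((Fintype.equivFinOfCardEq hA).symm i)).2
  · intro j
    simp only [Equiv.symm_trans_apply, Equiv.sumCongr_symm, Equiv.sumCongr_apply,
      Sum.map_inr]
    exact (((Fintype.equivFinOfCardEq hB).symm j)).2

/-- the subgraph of missing cross edges -/
def buildM (G : SimpleGraph V) {r s : ℕ} (e : V ≃ (Fin r ⊕ Fin s)) :
    SimpleGraph.Subgraph (completeBipartiteGraph (Fin r) (Fin s)) where
  verts := {a | ∃ b, (completeBipartiteGraph (Fin r) (Fin s)).Adj a b ∧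
    ¬ G.Adj (e.symm a) (e.symm b)}
  Adj a b := (completeBipartiteGraph (Fin r) (Fin s)).Adj a b ∧
    ¬ G.Adj (e.symm a) (e.symm b)
  adj_sub h := h.1
  edge_vert {v w} h := ⟨w, h⟩
  symm := ⟨fun a b h => ⟨h.1.symm, fun h' => h.2 h'.symm⟩⟩

lemma buildM_adj {r s : ℕ} (e : V ≃ (Fin r ⊕ Fin s)) (a b : Fin r ⊕ Fin s) :
    (buildM G e).Adj a b ↔ (completeBipartiteGraph (Fin r) (Fin s)).Adj a b ∧
      ¬ G.Adj (e.symm a) (e.symm b) := Iff.rfl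

lemma buildM_verts {r s : ℕ} (e : V ≃ (Fin r ⊕ Fin s)) (a : Fin r ⊕ Fin s) :
    a ∈ (buildM G e).verts ↔ ∃ b, (buildM G e).Adj a b := Iff.rfl

lemma build {A B : Finset V} (hst : Setup G A B) {r s : ℕ} (hr : A.card = r) (hs : B.card = s)
    (hmissA : ∀ x ∈ A, ∀ b1 ∈ B, ∀ b2 ∈ B, ¬ G.Adj x b1 → ¬ G.Adj x b2 → b1 = b2)
    (hmissB : ∀ b ∈ B, ∀ a1 ∈ A, ∀ a2 ∈ A, ¬ G.Adj a1 b → ¬ G.Adj a2 b → a1 = a2) :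
    ∃ M : SimpleGraph.Subgraph (completeBipartiteGraph (Fin r) (Fin s)),
      M.IsMatching ∧
      Nonempty (G ≃g (completeBipartiteGraph (Fin r) (Fin s) \ M.spanningCoe)) ∧
      ((∀ x ∈ A, ∃ b ∈ B, ¬ G.Adj x b) → (∀ b ∈ B, ∃ a ∈ A, ¬ G.Adj a b) → M.IsSpanning) ∧
      (∀ x0 ∈ A, (∀ b ∈ B, G.Adj x0 b) → M.edgeSet.ncard < r) ∧
      (∀ b0 ∈ B, (∀ a ∈ A, G.Adj a b0) → M.edgeSet.ncard < s) := by
  obtain ⟨hcov, hdisj, hAind, hBind⟩ := hst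
  obtain ⟨e, he1, he2, he3, he4⟩ := exists_good_equiv hcov hdisj hr hs
  refine ⟨buildM G e, ?_, ?_, ?_, ?_, ?_⟩
  · -- matching
    rintro v ⟨w, hw⟩
    refine ⟨w, hw, ?_⟩
    intro w' hw'
    rcases v with i | j
    · have hvA := he3 i
      rcases w with j1 | j1
      · exact absurd hw.1 (by simp)
      rcases w' with j2 | j2
      · exact absurd hw'.1 (by simp)
      have := hmissA _ hvA _ (he4 j1) _ (he4 j2) hw.2 hw'.2
      exact (e.symm.injective this).symm
    · have hvB := he4 j
      rcases w with i1 | j1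
      · rcases w' with i2 | j2
        · have := hmissB _ hvB _ (he3 i1) _ (he3 i2)
            (fun h => hw.2 h.symm) (fun h => hw'.2 h.symm)
          exact (e.symm.injective this).symm
        · exact absurd hw'.1 (by simp)
      · exact absurd hw.1 (by simp)
  · -- iso
    refine ⟨⟨e, ?_⟩⟩
    intro x y
    show (completeBipartiteGraph (Fin r) (Fin s) \ (buildM G e).spanningCoe).Adj (e x) (e y) ↔
      G.Adj x y
    rw [SimpleGraph.sdiff_adj]
    simp only [SimpleGraph.Subgraph.spanningCoe_adj, buildM_adj, Equiv.symm_apply_apply]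
    constructor
    · rintro ⟨h1, h2⟩
      by_contra hxy
      exact h2 ⟨h1, hxy⟩
    · intro hxy
      have hK : (completeBipartiteGraph (Fin r) (Fin s)).Adj (e x) (e y) := by
        rcases hcov x with hx | hx
        · rcases hcov y with hy | hy
          · exact absurd hxy (hAind x hx y hy)
          · obtain ⟨i, hi⟩ := he1 x hx
            obtain ⟨j, hj⟩ := he2 y hy
            rw [hi, hj]; simp
        · rcases hcov y with hy | hy
          · obtain ⟨j, hj⟩ := he2 x hx
            obtain ⟨i, hi⟩ := he1 y hy
            rw [hi, hj]; simp
          · exact absurd hxy (hBind x hx y hy)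
      exact ⟨hK, fun h => h.2 hxy⟩
  · -- spanning under hypothesis
    intro hA hB v
    rcases v with i | j
    · obtain ⟨b, hbB, hnadj⟩ := hA _ (he3 i)
      obtain ⟨j, hj⟩ := he2 b hbB
      have hsb : e.symm (Sum.inr j) = b := by rw [← hj]; exact e.symm_apply_apply b
      exact ⟨Sum.inr j, by simp, by rw [hsb]; exact hnadj⟩
    · obtain ⟨a, haA, hnadj⟩ := hB _ (he4 j)
      obtain ⟨i, hi⟩ := he1 a haA
      have hsa : e.symm (Sum.inl i) = a := by rw [← hi]; exact e.symm_apply_apply a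
      exact ⟨Sum.inl i, by simp, by rw [hsa]; exact fun h => hnadj h.symm⟩
  · -- count < r
    intro x0 hx0 hfull
    obtain ⟨i0, hi0⟩ := he1 x0 hx0
    have hsx0 : e.symm (Sum.inl i0) = x0 := by rw [← hi0]; exact e.symm_apply_apply x0
    have key : ∀ q : (buildM G e).edgeSet,
        ∃ i, (∃ j, q.val = s(Sum.inl i, Sum.inr j)) ∧ i ≠ i0 := by
      rintro ⟨q, hq⟩
      induction q using Sym2.ind with
      | _ a b =>
        rw [SimpleGraph.Subgraph.mem_edgeSet] at hq
        have hform : ∃ i j, s(a, b) = s(Sum.inl i, Sum.inr j) ∧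
            (buildM G e).Adj (Sum.inl i) (Sum.inr j) := by
          rcases a with i | j <;> rcases b with i' | j'
          · exact absurd hq.1 (by simp)
          · exact ⟨i, j', rfl, hq⟩
          · exact ⟨i', j, Sym2.eq_swap, (buildM G e).adj_symm hq⟩
          · exact absurd hq.1 (by simp)
        obtain ⟨i, j, hqe, hadj⟩ := hform
        refine ⟨i, ⟨j, hqe⟩, ?_⟩
        rintro rfl
        exact hadj.2 (by rw [hsx0]; exact hfull _ (he4 j))
    have finj : Function.Injective
        (fun q : (buildM G e).edgeSet => (⟨(key q).choose, (key q).choose_spec.2⟩ :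
          {i : Fin r // i ≠ i0})) := by
      rintro q1 q2 hq
      simp only [Subtype.mk_eq_mk] at hq
      obtain ⟨j1, hj1⟩ := (key q1).choose_spec.1
      obtain ⟨j2, hj2⟩ := (key q2).choose_spec.1
      rw [hq] at hj1
      have hadj1 : (buildM G e).Adj (Sum.inl (key q2).choose) (Sum.inr j1) := by
        rw [← SimpleGraph.Subgraph.mem_edgeSet, ← hj1]; exact q1.2
      have hadj2 : (buildM G e).Adj (Sum.inl (key q2).choose) (Sum.inr j2) := by
        rw [← SimpleGraph.Subgraph.mem_edgeSet, ← hj2]; exact q2.2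
      have := hmissA _ (he3 (key q2).choose) _ (he4 j1) _ (he4 j2) hadj1.2 hadj2.2
      have hj12 : j1 = j2 := Sum.inr_injective (e.symm.injective this)
      subst hj12
      exact Subtype.ext (hj1.trans hj2.symm)
    have hcard : (buildM G e).edgeSet.ncard ≤ r - 1 := by
      have h1 : Nat.card (buildM G e).edgeSet ≤ Nat.card {i : Fin r // i ≠ i0} :=
        Nat.card_le_card_of_injective _ finj
      have h2 : Nat.card {i : Fin r // i ≠ i0} = r - 1 := by
        rw [Nat.card_eq_fintype_card]
        have h3 := Fintype.card_subtype_compl (fun i : Fin r => i = i0)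
        simp only [Fintype.card_subtype_eq, Fintype.card_fin] at h3
        exact h3
      rw [← Nat.card_coe_set_eq]
      omega
    have hr1 : 1 ≤ r := by
      rw [← hr]
      exact Finset.card_pos.mpr ⟨x0, hx0⟩
    omega
  · -- count < s
    intro b0 hb0 hfull
    obtain ⟨j0, hj0⟩ := he2 b0 hb0
    have hsb0 : e.symm (Sum.inr j0) = b0 := by rw [← hj0]; exact e.symm_apply_apply b0
    have key : ∀ q : (buildM G e).edgeSet,
        ∃ j, (∃ i, q.val = s(Sum.inl i, Sum.inr j)) ∧ j ≠ j0 := by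
      rintro ⟨q, hq⟩
      induction q using Sym2.ind with
      | _ a b =>
        rw [SimpleGraph.Subgraph.mem_edgeSet] at hq
        have hform : ∃ i j, s(a, b) = s(Sum.inl i, Sum.inr j) ∧
            (buildM G e).Adj (Sum.inl i) (Sum.inr j) := by
          rcases a with i | j <;> rcases b with i' | j'
          · exact absurd hq.1 (by simp)
          · exact ⟨i, j', rfl, hq⟩
          · exact ⟨i', j, Sym2.eq_swap, (buildM G e).adj_symm hq⟩
          · exact absurd hq.1 (by simp)
        obtain ⟨i, j, hqe, hadj⟩ := hform
        refine ⟨j, ⟨i, hqe⟩, ?_⟩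
        rintro rfl
        exact hadj.2 (by rw [hsb0]; exact hfull _ (he3 i))
    have finj : Function.Injective
        (fun q : (buildM G e).edgeSet => (⟨(key q).choose, (key q).choose_spec.2⟩ :
          {j : Fin s // j ≠ j0})) := by
      rintro q1 q2 hq
      simp only [Subtype.mk_eq_mk] at hq
      obtain ⟨i1, hi1⟩ := (key q1).choose_spec.1
      obtain ⟨i2, hi2⟩ := (key q2).choose_spec.1
      rw [hq] at hi1
      have hadj1 : (buildM G e).Adj (Sum.inl i1) (Sum.inr (key q2).choose) := by
        rw [← SimpleGraph.Subgraph.mem_edgeSet, ← hi1]; exact q1.2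
      have hadj2 : (buildM G e).Adj (Sum.inl i2) (Sum.inr (key q2).choose) := by
        rw [← SimpleGraph.Subgraph.mem_edgeSet, ← hi2]; exact q2.2
      have := hmissB _ (he4 (key q2).choose) _ (he3 i1) _ (he3 i2) hadj1.2 hadj2.2
      have hi12 : i1 = i2 := Sum.inl_injective (e.symm.injective this)
      subst hi12
      exact Subtype.ext (hi1.trans hi2.symm)
    have hcard : (buildM G e).edgeSet.ncard ≤ s - 1 := by
      have h1 : Nat.card (buildM G e).edgeSet ≤ Nat.card {j : Fin s // j ≠ j0} :=
        Nat.card_le_card_of_injective _ finj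
      have h2 : Nat.card {j : Fin s // j ≠ j0} = s - 1 := by
        rw [Nat.card_eq_fintype_card]
        have h3 := Fintype.card_subtype_compl (fun j : Fin s => j = j0)
        simp only [Fintype.card_subtype_eq, Fintype.card_fin] at h3
        exact h3
      rw [← Nat.card_coe_set_eq]
      omega
    have hs1 : 1 ≤ s := by
      rw [← hs]
      exact Finset.card_pos.mpr ⟨b0, hb0⟩
    omega

lemma build_full {A B : Finset V} (hst : Setup G A B) {r s : ℕ} (hr : A.card = r)
    (hs : B.card = s) (hfull : ∀ x ∈ A, ∀ b ∈ B, G.Adj x b) :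
    Nonempty (G ≃g completeBipartiteGraph (Fin r) (Fin s)) := by
  obtain ⟨hcov, hdisj, hAind, hBind⟩ := hst
  obtain ⟨e, he1, he2, he3, he4⟩ := exists_good_equiv hcov hdisj hr hs
  refine ⟨⟨e, ?_⟩⟩
  intro x y
  show (completeBipartiteGraph (Fin r) (Fin s)).Adj (e x) (e y) ↔ G.Adj x y
  constructor
  · intro h
    rcases hx : e x with i | j <;> rcases hy : e y with i' | j'
    · rw [hx, hy] at h; simp at h
    · have hxA : x ∈ A := by
        have := he3 i; rw [← hx] at this; simpa using this
      have hyB : y ∈ B := by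
        have := he4 j'; rw [← hy] at this; simpa using this
      exact hfull x hxA y hyB
    · have hxB : x ∈ B := by
        have := he4 j; rw [← hx] at this; simpa using this
      have hyA : y ∈ A := by
        have := he3 i'; rw [← hy] at this; simpa using this
      exact (hfull y hyA x hxB).symm
    · rw [hx, hy] at h; simp at h
  · intro hxy
    rcases hcov x with hx | hx
    · rcases hcov y with hy | hy
      · exact absurd hxy (hAind x hx y hy)
      · obtain ⟨i, hi⟩ := he1 x hx
        obtain ⟨j, hj⟩ := he2 y hy
        rw [hi, hj]; simp
    · rcases hcov y with hy | hy
      · obtain ⟨j, hj⟩ := he2 x hx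
        obtain ⟨i, hi⟩ := he1 y hy
        rw [hi, hj]; simp
      · exact absurd hxy (hBind x hx y hy)


lemma forward (htf : G.CliqueFree 3) (hn : 4 ≤ Fintype.card V) (hP : PairProp G) :
    (∃ m : ℕ, 1 ≤ m ∧ Nonempty (G ≃g completeBipartiteGraph (Fin 1) (Fin m))) ∨
      (∃ r : ℕ, 2 ≤ r ∧
        ∃ M : SimpleGraph.Subgraph (completeBipartiteGraph (Fin r) (Fin r)),
          M.IsPerfectMatching ∧
          Nonempty (G ≃g (completeBipartiteGraph (Fin r) (Fin r) \ M.spanningCoe))) ∨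
      (∃ r s : ℕ, 2 ≤ r ∧ 2 ≤ s ∧
        ∃ M : SimpleGraph.Subgraph (completeBipartiteGraph (Fin r) (Fin s)),
          M.IsMatching ∧ M.edgeSet.ncard < min r s ∧
          Nonempty (G ≃g (completeBipartiteGraph (Fin r) (Fin s) \ M.spanningCoe))) := by
  classical
  obtain ⟨v0⟩ : Nonempty V := Fintype.card_pos_iff.mp (by omega)
  obtain ⟨u0, hneu, hc⟩ := hP v0
  obtain ⟨A, B, hst, hv0A, hu0B⟩ := setup_of_pair htf hneu hc
  have hdisjAB : Disjoint A B := Finset.disjoint_left.mpr (fun {a} ha hb => hst.2.1 a ⟨ha, hb⟩)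
  have hcards : A.card + B.card = Fintype.card V := by
    have hunion : A ∪ B = Finset.univ := by
      ext w
      simp only [Finset.mem_union, Finset.mem_univ, iff_true]
      exact hst.1 w
    rw [← Finset.card_union_of_disjoint hdisjAB, hunion, Finset.card_univ]
  have hA1 : 0 < A.card := Finset.card_pos.mpr ⟨v0, hv0A⟩
  have hB1 : 0 < B.card := Finset.card_pos.mpr ⟨u0, hu0B⟩
  by_cases hAe : A.card = 1
  · obtain ⟨c, hAc⟩ := Finset.card_eq_one.mp hAe
    have hcA : c ∈ A := by rw [hAc]; exact Finset.mem_singleton_self c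
    have hB3 : 3 ≤ B.card := by omega
    have hstar := star_case hP hst hAc hB3
    have hfull : ∀ x ∈ A, ∀ b ∈ B, G.Adj x b := by
      intro x hx b hb
      rw [hAc, Finset.mem_singleton] at hx
      subst hx
      exact hstar b (fun h => hst.2.1 b ⟨h ▸ hcA, hb⟩)
    exact Or.inl ⟨B.card, by omega, build_full hst hAe rfl hfull⟩
  by_cases hBe : B.card = 1
  · obtain ⟨c, hBc⟩ := Finset.card_eq_one.mp hBe
    have hcB : c ∈ B := by rw [hBc]; exact Finset.mem_singleton_self c
    have hA3 : 3 ≤ A.card := by omega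
    have hstar := star_case hP hst.symm hBc hA3
    have hfull : ∀ x ∈ B, ∀ a ∈ A, G.Adj x a := by
      intro x hx a ha
      rw [hBc, Finset.mem_singleton] at hx
      subst hx
      exact hstar a (fun h => hst.2.1 a ⟨ha, h ▸ hcB⟩)
    exact Or.inl ⟨A.card, by omega, build_full hst.symm hBe rfl hfull⟩
  · have hA2 : 2 ≤ A.card := by omega
    have hB2 : 2 ≤ B.card := by omega
    have hmissA := miss_unique hP hst hB2
    have hmissB' := miss_unique hP hst.symm hA2
    have hmissB : ∀ b ∈ B, ∀ a1 ∈ A, ∀ a2 ∈ A, ¬ G.Adj a1 b → ¬ G.Adj a2 b → a1 = a2 := by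
      intro b hb a1 h1 a2 h2 hn1 hn2
      exact hmissB' b hb a1 h1 a2 h2 (fun h => hn1 h.symm) (fun h => hn2 h.symm)
    by_cases hperf : (∀ x ∈ A, ∃ b ∈ B, ¬ G.Adj x b) ∧ (∀ b ∈ B, ∃ a ∈ A, ¬ G.Adj a b)
    · have hrs : B.card = A.card := by
        apply le_antisymm
        · apply Finset.card_le_card_of_injOn
            (f := fun b => if h : ∃ a ∈ A, ¬ G.Adj a b then h.choose else b)
          · intro b hb
            have h := hperf.2 b hb
            simp only [dif_pos h]
            exact h.choose_spec.1
          · intro b1 hb1 b2 hb2 heq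
            have h1 := hperf.2 b1 (Finset.mem_coe.mp hb1)
            have h2 := hperf.2 b2 (Finset.mem_coe.mp hb2)
            simp only [dif_pos h1, dif_pos h2] at heq
            have c1 := h1.choose_spec
            have c2 := h2.choose_spec
            rw [← heq] at c2
            exact hmissA _ c1.1 b1 (Finset.mem_coe.mp hb1) b2 (Finset.mem_coe.mp hb2) c1.2 c2.2
        · apply Finset.card_le_card_of_injOn
            (f := fun a => if h : ∃ b ∈ B, ¬ G.Adj a b then h.choose else a)
          · intro a ha
            have h := hperf.1 a ha
            simp only [dif_pos h]
            exact h.choose_spec.1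
          · intro a1 ha1 a2 ha2 heq
            have h1 := hperf.1 a1 (Finset.mem_coe.mp ha1)
            have h2 := hperf.1 a2 (Finset.mem_coe.mp ha2)
            simp only [dif_pos h1, dif_pos h2] at heq
            have c1 := h1.choose_spec
            have c2 := h2.choose_spec
            rw [← heq] at c2
            exact hmissB _ c1.1 a1 (Finset.mem_coe.mp ha1) a2 (Finset.mem_coe.mp ha2) c1.2 c2.2
      obtain ⟨M, hmatch, hiso, hspan, _, _⟩ := build hst rfl hrs hmissA hmissB
      exact Or.inr (Or.inl ⟨A.card, hA2, M, ⟨hmatch, hspan hperf.1 hperf.2⟩, hiso⟩)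
    · have hfulls : (∃ x0 ∈ A, ∀ b ∈ B, G.Adj x0 b) ∧ (∃ b0 ∈ B, ∀ a ∈ A, G.Adj a b0) := by
        rcases not_and_or.mp hperf with h | h
        · push_neg at h
          obtain ⟨x0, hx0, hx0f⟩ := h
          refine ⟨⟨x0, hx0, hx0f⟩, ?_⟩
          by_contra hB0
          push_neg at hB0
          obtain ⟨y, hyB, _, hy2⟩ := claimD hP hst hB2 x0 hx0
          obtain ⟨a, haA, hna⟩ := hB0 y hyB
          have hax0 : a ≠ x0 := fun h => hna (h ▸ (hx0f y hyB))
          exact hna (hy2 a haA hax0).symm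
        · push_neg at h
          obtain ⟨b0, hb0, hb0f⟩ := h
          refine ⟨?_, ⟨b0, hb0, hb0f⟩⟩
          by_contra hA0
          push_neg at hA0
          obtain ⟨y, hyA, _, hy2⟩ := claimD hP hst.symm hA2 b0 hb0
          obtain ⟨b', hb'B, hnb'⟩ := hA0 y hyA
          have hbne : b' ≠ b0 := fun h => hnb' (h ▸ hb0f y hyA)
          exact hnb' (hy2 b' hb'B hbne)
      obtain ⟨⟨x0, hx0, hx0f⟩, ⟨b0, hb0, hb0f⟩⟩ := hfulls
      obtain ⟨M, hmatch, hiso, _, hcr, hcs⟩ := build hst rfl rfl hmissA hmissB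
      exact Or.inr (Or.inr ⟨A.card, B.card, hA2, hB2, M, hmatch,
        lt_min (hcr x0 hx0 hx0f) (hcs b0 hb0 hb0f), hiso⟩)

end GCProof


theorem gc_triangleFree_eq_card_iff (G : SimpleGraph V) (htf : G.CliqueFree 3)
    (hn : 4 ≤ Fintype.card V) :
    globalCoalitionNumber G = Fintype.card V ↔
      (∃ m : ℕ, 1 ≤ m ∧ Nonempty (G ≃g completeBipartiteGraph (Fin 1) (Fin m))) ∨
      (∃ r : ℕ, 2 ≤ r ∧
        ∃ M : SimpleGraph.Subgraph (completeBipartiteGraph (Fin r) (Fin r)),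
          M.IsPerfectMatching ∧
          Nonempty (G ≃g (completeBipartiteGraph (Fin r) (Fin r) \ M.spanningCoe))) ∨
      (∃ r s : ℕ, 2 ≤ r ∧ 2 ≤ s ∧
        ∃ M : SimpleGraph.Subgraph (completeBipartiteGraph (Fin r) (Fin s)),
          M.IsMatching ∧ M.edgeSet.ncard < min r s ∧
          Nonempty (G ≃g (completeBipartiteGraph (Fin r) (Fin s) \ M.spanningCoe))) := by
  rw [GCProof.gc_eq_card_iff (by omega) G]
  exact ⟨fun hP => GCProof.forward htf hn hP, fun h => GCProof.backward h⟩
end
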